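/- arXiv:1707.01804 — 7 statements merged into one kernel-verified Lean document; each statement's English description precedes it below -/
import Mathlib

section
/- Let α1, α2, α3 > 0 be real numbers and let u1, u2, u3 be nonzero vectors in ℝ² lying in the closed upper half-plane {x = (x1,x2) : x2 ≥ 0}, pairwise non-parallel, and aligned in counter-clockwise order, i.e. u1×u2 > 0, u2×u3 > 0 and u1×u3 > 0. Define S1 = {±u_i : 1 ≤ i ≤ 3} ∪ {ε u_i + ε' u_j : 1 ≤ i < j ≤ 3, ε, ε' ∈ {−1,1}, u_i·u_j ≠ 0} and S2 = {±u_i : 1 ≤ i ≤ 3} ∪ {ε α_i u_i + ε' α_j u_j : 1 ≤ i < j ≤ 3, ε, ε' ∈ {−1,1}, u_i·u_j ≠ 0}. Assume that every sole vector from S1 is parallel to some nonzero vector of S2, and that every sole vector from S2 is parallel to some nonzero vector of S1. Then α1 = α2 = α3. -/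
noncomputable section

/-- Cross product of two planar vectors. -/
def cross (u v : ℝ × ℝ) : ℝ := u.1 * v.2 - u.2 * v.1

/-- Euclidean dot product of two planar vectors. -/
def dot (u v : ℝ × ℝ) : ℝ := u.1 * v.1 + u.2 * v.2

/-- The admissible signs. -/
def pm : Set ℝ := {1, -1}

/-- The set `S` associated with scaling coefficients `c` and vectors `u`:
`{± u_i} ∪ {ε c_i u_i + ε' c_j u_j : i < j, u_i · u_j ≠ 0, ε, ε' ∈ {−1,1}}`. -/
def Sset (c : Fin 3 → ℝ) (u : Fin 3 → ℝ × ℝ) : Set (ℝ × ℝ) :=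
  {v | ∃ i : Fin 3, v = u i ∨ v = -u i} ∪
  {v | ∃ i j : Fin 3, i < j ∧ dot (u i) (u j) ≠ 0 ∧
    ∃ ε ε' : ℝ, ε ∈ pm ∧ ε' ∈ pm ∧ v = (ε * c i) • u i + (ε' * c j) • u j}

/-- `v` is a sole vector from `Sset c u`: it has the form `ε c_i u_i + ε' c_j u_j`
(with `i < j`, `u_i · u_j ≠ 0`, `ε, ε' ∈ {−1,1}`), and it equals neither any `± u_k`
nor any other such combination. -/
def IsSole (c : Fin 3 → ℝ) (u : Fin 3 → ℝ × ℝ) (v : ℝ × ℝ) : Prop :=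
  ∃ i j : Fin 3, i < j ∧ dot (u i) (u j) ≠ 0 ∧
    ∃ ε ε' : ℝ, ε ∈ pm ∧ ε' ∈ pm ∧ v = (ε * c i) • u i + (ε' * c j) • u j ∧
      (∀ k : Fin 3, v ≠ u k ∧ v ≠ -u k) ∧
      (∀ k l : Fin 3, ∀ δ δ' : ℝ, k < l → dot (u k) (u l) ≠ 0 → δ ∈ pm → δ' ∈ pm →
        (k, δ, l, δ') ≠ (i, ε, j, ε') → v ≠ (δ * c k) • u k + (δ' * c l) • u l)

lemma pm_cases {x : ℝ} (h : x ∈ pm) : x = 1 ∨ x = -1 := by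
  simpa [pm] using h

lemma one_mem_pm : (1:ℝ) ∈ pm := by simp [pm]
lemma neg_one_mem_pm : (-1:ℝ) ∈ pm := by simp [pm]

lemma cross_coeff (u0 u2 : ℝ × ℝ) (a b a' b' : ℝ) :
    cross (a • u0 + b • u2) (a' • u0 + b' • u2) = (a * b' - b * a') * cross u0 u2 := by
  simp [cross, Prod.smul_fst, Prod.smul_snd, Prod.fst_add, Prod.snd_add, smul_eq_mul]
  ring

lemma eq_coeffs {u0 u2 : ℝ × ℝ} (h : cross u0 u2 ≠ 0) {a b a' b' : ℝ}
    (he : a • u0 + b • u2 = a' • u0 + b' • u2) : a = a' ∧ b = b' := by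
  have h1 : a * u0.1 + b * u2.1 = a' * u0.1 + b' * u2.1 := by
    have := congrArg Prod.fst he
    simpa [Prod.smul_fst, Prod.fst_add, smul_eq_mul] using this
  have h2 : a * u0.2 + b * u2.2 = a' * u0.2 + b' * u2.2 := by
    have := congrArg Prod.snd he
    simpa [Prod.smul_snd, Prod.snd_add, smul_eq_mul] using this
  have e1 : (a - a') * cross u0 u2 = 0 := by
    simp only [cross]; linear_combination u2.2 * h1 - u2.1 * h2
  have e2 : (b - b') * cross u0 u2 = 0 := by
    simp only [cross]; linear_combination u0.1 * h2 - u0.2 * h1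
  constructor
  · rcases mul_eq_zero.mp e1 with h' | h'
    · linarith
    · exact absurd h' h
  · rcases mul_eq_zero.mp e2 with h' | h'
    · linarith
    · exact absurd h' h

lemma cross_zero_coeff {u0 u2 : ℝ × ℝ} (h : cross u0 u2 ≠ 0) {a b a' b' : ℝ}
    (he : cross (a • u0 + b • u2) (a' • u0 + b' • u2) = 0) : a * b' = b * a' := by
  rw [cross_coeff] at he
  rcases mul_eq_zero.mp he with h' | h'
  · linarith
  · exact absurd h' h

lemma EXT (u : Fin 3 → ℝ × ℝ) (p q : ℝ)
    (h2 : u 1 = p • u 0 + q • u 2)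
    (hC : cross (u 0) (u 2) ≠ 0)
    (c : Fin 3 → ℝ)
    (w : ℝ × ℝ) (hw : w ∈ Sset c u)
    (a b : ℝ) (hvw : cross (a • u 0 + b • u 2) w = 0) :
    b = 0 ∨ a = 0 ∨ a * q = b * p ∨
    (dot (u 0) (u 1) ≠ 0 ∧ ∃ ε ε' : ℝ, (ε = 1 ∨ ε = -1) ∧ (ε' = 1 ∨ ε' = -1) ∧
      a * (ε' * c 1 * q) = b * (ε * c 0 + ε' * c 1 * p)) ∨
    (dot (u 0) (u 2) ≠ 0 ∧ ∃ ε ε' : ℝ, (ε = 1 ∨ ε = -1) ∧ (ε' = 1 ∨ ε' = -1) ∧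
      a * (ε' * c 2) = b * (ε * c 0)) ∨
    (dot (u 1) (u 2) ≠ 0 ∧ ∃ ε ε' : ℝ, (ε = 1 ∨ ε = -1) ∧ (ε' = 1 ∨ ε' = -1) ∧
      a * (ε * c 1 * q + ε' * c 2) = b * (ε * c 1 * p)) := by
  rcases hw with ⟨i, hi | hi⟩ | ⟨i, j, hij, hd, ε, ε', hε, hε', hcomb⟩
  · subst hi
    fin_cases i
    · replace hvw : cross (a • u 0 + b • u 2) ((1:ℝ) • u 0 + (0:ℝ) • u 2) = 0 := by
        rw [show (1:ℝ) • u 0 + (0:ℝ) • u 2 = u 0 by module]; exact hvw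
      have := cross_zero_coeff hC hvw
      left; linarith
    · replace hvw : cross (a • u 0 + b • u 2) (p • u 0 + q • u 2) = 0 := by
        rw [← h2]; exact hvw
      have := cross_zero_coeff hC hvw
      right; right; left; linarith
    · replace hvw : cross (a • u 0 + b • u 2) ((0:ℝ) • u 0 + (1:ℝ) • u 2) = 0 := by
        rw [show (0:ℝ) • u 0 + (1:ℝ) • u 2 = u 2 by module]; exact hvw
      have := cross_zero_coeff hC hvw
      right; left; linarith
  · subst hi
    fin_cases i
    · replace hvw : cross (a • u 0 + b • u 2) ((-1:ℝ) • u 0 + (0:ℝ) • u 2) = 0 := by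
        rw [show (-1:ℝ) • u 0 + (0:ℝ) • u 2 = -u 0 by module]; exact hvw
      have := cross_zero_coeff hC hvw
      left; linarith
    · replace hvw : cross (a • u 0 + b • u 2) ((-p) • u 0 + (-q) • u 2) = 0 := by
        rw [show (-p) • u 0 + (-q) • u 2 = -u 1 by rw [h2]; module]; exact hvw
      have := cross_zero_coeff hC hvw
      right; right; left; linarith
    · replace hvw : cross (a • u 0 + b • u 2) ((0:ℝ) • u 0 + (-1:ℝ) • u 2) = 0 := by
        rw [show (0:ℝ) • u 0 + (-1:ℝ) • u 2 = -u 2 by module]; exact hvw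
      have := cross_zero_coeff hC hvw
      right; left; linarith
  · subst hcomb
    fin_cases i <;> fin_cases j <;>
      first
      | exact absurd hij (by decide)
      | skip
    · -- pair (0,1)
      replace hd : dot (u 0) (u 1) ≠ 0 := hd
      replace hvw : cross (a • u 0 + b • u 2)
          ((ε * c 0 + ε' * c 1 * p) • u 0 + (ε' * c 1 * q) • u 2) = 0 := by
        rw [show (ε * c 0 + ε' * c 1 * p) • u 0 + (ε' * c 1 * q) • u 2
            = (ε * c 0) • u 0 + (ε' * c 1) • u 1 by rw [h2]; module]; exact hvw
      have := cross_zero_coeff hC hvw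
      exact Or.inr (Or.inr (Or.inr (Or.inl ⟨hd, ε, ε', pm_cases hε, pm_cases hε', by linarith⟩)))
    · -- pair (0,2)
      replace hd : dot (u 0) (u 2) ≠ 0 := hd
      replace hvw : cross (a • u 0 + b • u 2)
          ((ε * c 0) • u 0 + (ε' * c 2) • u 2) = 0 := hvw
      have := cross_zero_coeff hC hvw
      exact Or.inr (Or.inr (Or.inr (Or.inr (Or.inl ⟨hd, ε, ε', pm_cases hε, pm_cases hε', by linarith⟩))))
    · -- pair (1,2)
      replace hd : dot (u 1) (u 2) ≠ 0 := hd
      replace hvw : cross (a • u 0 + b • u 2)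
          ((ε * c 1 * p) • u 0 + (ε * c 1 * q + ε' * c 2) • u 2) = 0 := by
        rw [show (ε * c 1 * p) • u 0 + (ε * c 1 * q + ε' * c 2) • u 2
            = (ε * c 1) • u 1 + (ε' * c 2) • u 2 by rw [h2]; module]; exact hvw
      have := cross_zero_coeff hC hvw
      exact Or.inr (Or.inr (Or.inr (Or.inr (Or.inr ⟨hd, ε, ε', pm_cases hε, pm_cases hε', by linarith⟩))))

lemma sole01 (u : Fin 3 → ℝ × ℝ) (p q : ℝ) (hp : 0 < p) (hq : 0 < q)
    (h2 : u 1 = p • u 0 + q • u 2) (hC : cross (u 0) (u 2) ≠ 0)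
    (c : Fin 3 → ℝ) (hc : ∀ i, 0 < c i) (hd : dot (u 0) (u 1) ≠ 0) :
    IsSole c u ((c 0) • u 0 + (c 1) • u 1) := by
  have key : ∀ (X : ℝ × ℝ) (A' B' : ℝ), X = A' • u 0 + B' • u 2 →
      ¬(c 0 + c 1 * p = A' ∧ c 1 * q = B') → (c 0) • u 0 + (c 1) • u 1 ≠ X := by
    rintro X A' B' rfl hcon h
    refine hcon (eq_coeffs hC (a := c 0 + c 1 * p) (b := c 1 * q) ?_)
    rw [← h, h2]; module
  refine ⟨0, 1, by decide, hd, 1, 1, one_mem_pm, one_mem_pm, by module, ?_, ?_⟩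
  · intro k
    fin_cases k
    · exact ⟨key (u 0) 1 0 (by module)
        (by rintro ⟨e1, e2⟩; nlinarith [mul_pos (hc 1) hq]),
        key (-u 0) (-1) 0 (by module)
        (by rintro ⟨e1, e2⟩; nlinarith [mul_pos (hc 1) hq])⟩
    · refine ⟨key (u 1) p q h2 ?_, key (-u 1) (-p) (-q) (by rw [h2]; module) ?_⟩
      · rintro ⟨e1, e2⟩
        have h1 : c 1 = 1 := by
          rcases mul_eq_zero.mp (show (c 1 - 1) * q = 0 by linarith) with h' | h'
          · linarith
          · exact absurd h' (ne_of_gt hq)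
        rw [h1] at e1
        nlinarith [hc 0]
      · rintro ⟨e1, e2⟩; nlinarith [mul_pos (hc 1) hq]
    · exact ⟨key (u 2) 0 1 (by module)
        (by rintro ⟨e1, e2⟩; nlinarith [mul_pos (hc 1) hp, hc 0]),
        key (-u 2) 0 (-1) (by module)
        (by rintro ⟨e1, e2⟩; nlinarith [mul_pos (hc 1) hp, hc 0])⟩
  · intro k l δ δ' hkl hdkl hδ hδ' hne
    fin_cases k <;> fin_cases l <;> (try exact absurd hkl (by decide)) <;>
      rcases pm_cases hδ with rfl | rfl <;> rcases pm_cases hδ' with rfl | rfl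
    -- pair (0,1), signs (1,1),(1,-1),(-1,1),(-1,-1)
    · exact absurd rfl hne
    · exact key (((1:ℝ) * c 0) • u 0 + ((-1:ℝ) * c 1) • u 1)
        (1 * c 0 + (-1) * c 1 * p) ((-1) * c 1 * q) (by rw [h2]; module)
        (by rintro ⟨e1, e2⟩; nlinarith [mul_pos (hc 1) hq])
    · exact key (((-1:ℝ) * c 0) • u 0 + ((1:ℝ) * c 1) • u 1)
        ((-1) * c 0 + 1 * c 1 * p) (1 * c 1 * q) (by rw [h2]; module)
        (by rintro ⟨e1, e2⟩; nlinarith [hc 0])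
    · exact key (((-1:ℝ) * c 0) • u 0 + ((-1:ℝ) * c 1) • u 1)
        ((-1) * c 0 + (-1) * c 1 * p) ((-1) * c 1 * q) (by rw [h2]; module)
        (by rintro ⟨e1, e2⟩; nlinarith [mul_pos (hc 1) hq])
    -- pair (0,2)
    · exact key (((1:ℝ) * c 0) • u 0 + ((1:ℝ) * c 2) • u 2) (1 * c 0) (1 * c 2) (by module)
        (by rintro ⟨e1, e2⟩; nlinarith [mul_pos (hc 1) hp])
    · exact key (((1:ℝ) * c 0) • u 0 + ((-1:ℝ) * c 2) • u 2) (1 * c 0) ((-1) * c 2) (by module)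
        (by rintro ⟨e1, e2⟩; nlinarith [mul_pos (hc 1) hp])
    · exact key (((-1:ℝ) * c 0) • u 0 + ((1:ℝ) * c 2) • u 2) ((-1) * c 0) (1 * c 2) (by module)
        (by rintro ⟨e1, e2⟩; nlinarith [mul_pos (hc 1) hp, hc 0])
    · exact key (((-1:ℝ) * c 0) • u 0 + ((-1:ℝ) * c 2) • u 2) ((-1) * c 0) ((-1) * c 2) (by module)
        (by rintro ⟨e1, e2⟩; nlinarith [mul_pos (hc 1) hp, hc 0])
    -- pair (1,2)
    · exact key (((1:ℝ) * c 1) • u 1 + ((1:ℝ) * c 2) • u 2)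
        (1 * c 1 * p) (1 * c 1 * q + 1 * c 2) (by rw [h2]; module)
        (by rintro ⟨e1, e2⟩; nlinarith [hc 0])
    · exact key (((1:ℝ) * c 1) • u 1 + ((-1:ℝ) * c 2) • u 2)
        (1 * c 1 * p) (1 * c 1 * q + (-1) * c 2) (by rw [h2]; module)
        (by rintro ⟨e1, e2⟩; nlinarith [hc 0])
    · exact key (((-1:ℝ) * c 1) • u 1 + ((1:ℝ) * c 2) • u 2)
        ((-1) * c 1 * p) ((-1) * c 1 * q + 1 * c 2) (by rw [h2]; module)
        (by rintro ⟨e1, e2⟩; nlinarith [hc 0, mul_pos (hc 1) hp])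
    · exact key (((-1:ℝ) * c 1) • u 1 + ((-1:ℝ) * c 2) • u 2)
        ((-1) * c 1 * p) ((-1) * c 1 * q + (-1) * c 2) (by rw [h2]; module)
        (by rintro ⟨e1, e2⟩; nlinarith [hc 0, mul_pos (hc 1) hp])

lemma sole12 (u : Fin 3 → ℝ × ℝ) (p q : ℝ) (hp : 0 < p) (hq : 0 < q)
    (h2 : u 1 = p • u 0 + q • u 2) (hC : cross (u 0) (u 2) ≠ 0)
    (c : Fin 3 → ℝ) (hc : ∀ i, 0 < c i) (hd : dot (u 1) (u 2) ≠ 0) :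
    IsSole c u ((c 1) • u 1 + (c 2) • u 2) := by
  have key : ∀ (X : ℝ × ℝ) (A' B' : ℝ), X = A' • u 0 + B' • u 2 →
      ¬(c 1 * p = A' ∧ c 1 * q + c 2 = B') → (c 1) • u 1 + (c 2) • u 2 ≠ X := by
    rintro X A' B' rfl hcon h
    refine hcon (eq_coeffs hC (a := c 1 * p) (b := c 1 * q + c 2) ?_)
    rw [← h, h2]; module
  refine ⟨1, 2, by decide, hd, 1, 1, one_mem_pm, one_mem_pm, by module, ?_, ?_⟩
  · intro k
    fin_cases k
    · exact ⟨key (u 0) 1 0 (by module)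
        (by rintro ⟨e1, e2⟩; nlinarith [mul_pos (hc 1) hq, hc 2]),
        key (-u 0) (-1) 0 (by module)
        (by rintro ⟨e1, e2⟩; nlinarith [mul_pos (hc 1) hq, hc 2])⟩
    · refine ⟨key (u 1) p q h2 ?_, key (-u 1) (-p) (-q) (by rw [h2]; module) ?_⟩
      · rintro ⟨e1, e2⟩
        have h1 : c 1 = 1 := by
          rcases mul_eq_zero.mp (show (c 1 - 1) * p = 0 by linarith) with h' | h'
          · linarith
          · exact absurd h' (ne_of_gt hp)
        rw [h1] at e2
        nlinarith [hc 2]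
      · rintro ⟨e1, e2⟩; nlinarith [mul_pos (hc 1) hp, hp]
    · exact ⟨key (u 2) 0 1 (by module)
        (by rintro ⟨e1, e2⟩; nlinarith [mul_pos (hc 1) hp]),
        key (-u 2) 0 (-1) (by module)
        (by rintro ⟨e1, e2⟩; nlinarith [mul_pos (hc 1) hp])⟩
  · intro k l δ δ' hkl hdkl hδ hδ' hne
    fin_cases k <;> fin_cases l <;> (try exact absurd hkl (by decide)) <;>
      rcases pm_cases hδ with rfl | rfl <;> rcases pm_cases hδ' with rfl | rfl
    -- pair (0,1)
    · exact key (((1:ℝ) * c 0) • u 0 + ((1:ℝ) * c 1) • u 1)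
        (1 * c 0 + 1 * c 1 * p) (1 * c 1 * q) (by rw [h2]; module)
        (by rintro ⟨e1, e2⟩; nlinarith [hc 2])
    · exact key (((1:ℝ) * c 0) • u 0 + ((-1:ℝ) * c 1) • u 1)
        (1 * c 0 + (-1) * c 1 * p) ((-1) * c 1 * q) (by rw [h2]; module)
        (by rintro ⟨e1, e2⟩; nlinarith [mul_pos (hc 1) hq, hc 2])
    · exact key (((-1:ℝ) * c 0) • u 0 + ((1:ℝ) * c 1) • u 1)
        ((-1) * c 0 + 1 * c 1 * p) (1 * c 1 * q) (by rw [h2]; module)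
        (by rintro ⟨e1, e2⟩; nlinarith [hc 2])
    · exact key (((-1:ℝ) * c 0) • u 0 + ((-1:ℝ) * c 1) • u 1)
        ((-1) * c 0 + (-1) * c 1 * p) ((-1) * c 1 * q) (by rw [h2]; module)
        (by rintro ⟨e1, e2⟩; nlinarith [mul_pos (hc 1) hq, hc 2])
    -- pair (0,2)
    · exact key (((1:ℝ) * c 0) • u 0 + ((1:ℝ) * c 2) • u 2) (1 * c 0) (1 * c 2) (by module)
        (by rintro ⟨e1, e2⟩; nlinarith [mul_pos (hc 1) hq])
    · exact key (((1:ℝ) * c 0) • u 0 + ((-1:ℝ) * c 2) • u 2) (1 * c 0) ((-1) * c 2) (by module)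
        (by rintro ⟨e1, e2⟩; nlinarith [mul_pos (hc 1) hq, hc 2])
    · exact key (((-1:ℝ) * c 0) • u 0 + ((1:ℝ) * c 2) • u 2) ((-1) * c 0) (1 * c 2) (by module)
        (by rintro ⟨e1, e2⟩; nlinarith [mul_pos (hc 1) hq])
    · exact key (((-1:ℝ) * c 0) • u 0 + ((-1:ℝ) * c 2) • u 2) ((-1) * c 0) ((-1) * c 2) (by module)
        (by rintro ⟨e1, e2⟩; nlinarith [mul_pos (hc 1) hq, hc 2])
    -- pair (1,2)
    · exact absurd rfl hne
    · exact key (((1:ℝ) * c 1) • u 1 + ((-1:ℝ) * c 2) • u 2)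
        (1 * c 1 * p) (1 * c 1 * q + (-1) * c 2) (by rw [h2]; module)
        (by rintro ⟨e1, e2⟩; nlinarith [hc 2])
    · exact key (((-1:ℝ) * c 1) • u 1 + ((1:ℝ) * c 2) • u 2)
        ((-1) * c 1 * p) ((-1) * c 1 * q + 1 * c 2) (by rw [h2]; module)
        (by rintro ⟨e1, e2⟩; nlinarith [mul_pos (hc 1) hp])
    · exact key (((-1:ℝ) * c 1) • u 1 + ((-1:ℝ) * c 2) • u 2)
        ((-1) * c 1 * p) ((-1) * c 1 * q + (-1) * c 2) (by rw [h2]; module)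
        (by rintro ⟨e1, e2⟩; nlinarith [mul_pos (hc 1) hp])

lemma sole02 (u : Fin 3 → ℝ × ℝ) (p q : ℝ) (hp : 0 < p) (hq : 0 < q)
    (h2 : u 1 = p • u 0 + q • u 2) (hC : cross (u 0) (u 2) ≠ 0)
    (c : Fin 3 → ℝ) (hc : ∀ i, 0 < c i) (hd : dot (u 0) (u 2) ≠ 0) :
    IsSole c u ((c 0) • u 0 + (-(c 2)) • u 2) := by
  have key : ∀ (X : ℝ × ℝ) (A' B' : ℝ), X = A' • u 0 + B' • u 2 →
      ¬(c 0 = A' ∧ -(c 2) = B') → (c 0) • u 0 + (-(c 2)) • u 2 ≠ X := by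
    rintro X A' B' rfl hcon h
    exact hcon (eq_coeffs hC (a := c 0) (b := -(c 2)) h)
  refine ⟨0, 2, by decide, hd, 1, -1, one_mem_pm, neg_one_mem_pm, by module, ?_, ?_⟩
  · intro k
    fin_cases k
    · exact ⟨key (u 0) 1 0 (by module)
        (by rintro ⟨e1, e2⟩; nlinarith [hc 2]),
        key (-u 0) (-1) 0 (by module)
        (by rintro ⟨e1, e2⟩; nlinarith [hc 2])⟩
    · exact ⟨key (u 1) p q h2
        (by rintro ⟨e1, e2⟩; nlinarith [hc 2, hq]),
        key (-u 1) (-p) (-q) (by rw [h2]; module)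
        (by rintro ⟨e1, e2⟩; nlinarith [hc 0, hp])⟩
    · exact ⟨key (u 2) 0 1 (by module)
        (by rintro ⟨e1, e2⟩; nlinarith [hc 0]),
        key (-u 2) 0 (-1) (by module)
        (by rintro ⟨e1, e2⟩; nlinarith [hc 0])⟩
  · intro k l δ δ' hkl hdkl hδ hδ' hne
    fin_cases k <;> fin_cases l <;> (try exact absurd hkl (by decide)) <;>
      rcases pm_cases hδ with rfl | rfl <;> rcases pm_cases hδ' with rfl | rfl
    -- pair (0,1)
    · exact key (((1:ℝ) * c 0) • u 0 + ((1:ℝ) * c 1) • u 1)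
        (1 * c 0 + 1 * c 1 * p) (1 * c 1 * q) (by rw [h2]; module)
        (by rintro ⟨e1, e2⟩; nlinarith [mul_pos (hc 1) hq, hc 2])
    · exact key (((1:ℝ) * c 0) • u 0 + ((-1:ℝ) * c 1) • u 1)
        (1 * c 0 + (-1) * c 1 * p) ((-1) * c 1 * q) (by rw [h2]; module)
        (by rintro ⟨e1, e2⟩; nlinarith [mul_pos (hc 1) hp])
    · exact key (((-1:ℝ) * c 0) • u 0 + ((1:ℝ) * c 1) • u 1)
        ((-1) * c 0 + 1 * c 1 * p) (1 * c 1 * q) (by rw [h2]; module)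
        (by rintro ⟨e1, e2⟩; nlinarith [mul_pos (hc 1) hq, hc 2])
    · exact key (((-1:ℝ) * c 0) • u 0 + ((-1:ℝ) * c 1) • u 1)
        ((-1) * c 0 + (-1) * c 1 * p) ((-1) * c 1 * q) (by rw [h2]; module)
        (by rintro ⟨e1, e2⟩; nlinarith [hc 0, mul_pos (hc 1) hp])
    -- pair (0,2)
    · exact key (((1:ℝ) * c 0) • u 0 + ((1:ℝ) * c 2) • u 2) (1 * c 0) (1 * c 2) (by module)
        (by rintro ⟨e1, e2⟩; nlinarith [hc 2])
    · exact absurd rfl hne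
    · exact key (((-1:ℝ) * c 0) • u 0 + ((1:ℝ) * c 2) • u 2) ((-1) * c 0) (1 * c 2) (by module)
        (by rintro ⟨e1, e2⟩; nlinarith [hc 0])
    · exact key (((-1:ℝ) * c 0) • u 0 + ((-1:ℝ) * c 2) • u 2) ((-1) * c 0) ((-1) * c 2) (by module)
        (by rintro ⟨e1, e2⟩; nlinarith [hc 0])
    -- pair (1,2)
    · exact key (((1:ℝ) * c 1) • u 1 + ((1:ℝ) * c 2) • u 2)
        (1 * c 1 * p) (1 * c 1 * q + 1 * c 2) (by rw [h2]; module)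
        (by rintro ⟨e1, e2⟩; nlinarith [mul_pos (hc 1) hq, hc 2])
    · exact key (((1:ℝ) * c 1) • u 1 + ((-1:ℝ) * c 2) • u 2)
        (1 * c 1 * p) (1 * c 1 * q + (-1) * c 2) (by rw [h2]; module)
        (by rintro ⟨e1, e2⟩; nlinarith [mul_pos (hc 1) hq])
    · exact key (((-1:ℝ) * c 1) • u 1 + ((1:ℝ) * c 2) • u 2)
        ((-1) * c 1 * p) ((-1) * c 1 * q + 1 * c 2) (by rw [h2]; module)
        (by rintro ⟨e1, e2⟩; nlinarith [hc 0, mul_pos (hc 1) hp])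
    · exact key (((-1:ℝ) * c 1) • u 1 + ((-1:ℝ) * c 2) • u 2)
        ((-1) * c 1 * p) ((-1) * c 1 * q + (-1) * c 2) (by rw [h2]; module)
        (by rintro ⟨e1, e2⟩; nlinarith [hc 0, mul_pos (hc 1) hp])

lemma caseA {p q a b c : ℝ} (hp : 0 < p) (hq : 0 < q) (ha : 0 < a) (hb : 0 < b) (hc : 0 < c)
    (h3 : a = b ∨ c * (1 + p) = b * q)
    (h4 : a = b ∨ a * q = a + b * p)
    (h5 : b = c ∨ a * (q + 1) = b * p)
    (h6 : b = c ∨ b * q + c = c * p) : a = b ∧ b = c := by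
  by_cases hab : a = b
  · refine ⟨hab, ?_⟩
    rcases h5 with h | h5e
    · exact h
    rcases h6 with h | h6e
    · exact h
    rw [← hab] at h5e h6e
    have hp1 : p = q + 1 := by
      have e : a * (p - (q + 1)) = 0 := by linear_combination -h5e
      rcases mul_eq_zero.mp e with h' | h'
      · exact absurd h' (ne_of_gt ha)
      · linarith
    rw [hp1] at h6e
    rw [← hab]
    have e : (a - c) * q = 0 := by linear_combination h6e
    rcases mul_eq_zero.mp e with h' | h'
    · linarith
    · exact absurd h' (ne_of_gt hq)
  · exfalso
    rcases h4 with h | h4e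
    · exact hab h
    rcases h3 with h | h3e
    · exact hab h
    by_cases hbc : b = c
    · rw [← hbc] at h3e
      have hq1 : q = 1 + p := by
        have e : b * (q - (1 + p)) = 0 := by linear_combination -h3e
        rcases mul_eq_zero.mp e with h' | h'
        · exact absurd h' (ne_of_gt hb)
        · linarith
      rw [hq1] at h4e
      have e : (a - b) * p = 0 := by linear_combination h4e
      rcases mul_eq_zero.mp e with h' | h'
      · exact hab (by linarith)
      · exact absurd h' (ne_of_gt hp)
    · rcases h5 with h | h5e
      · exact hbc h
      linarith

lemma caseB {p q a b c : ℝ} (hp : 0 < p) (hq : 0 < q) (ha : 0 < a) (hb : 0 < b) (hc : 0 < c)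
    (h1 : a = c ∨ c = b * (p + q))
    (h2 : a = c ∨ a * q + c * p = a)
    (h5 : b = c ∨ c * p = a * (q + 1))
    (h6 : b = c ∨ b * p = b * q + c) : a = b ∧ b = c := by
  have hbc : b = c := by
    by_contra hbc
    rcases h6 with h | h6e
    · exact hbc h
    rcases h5 with h | h5e
    · exact hbc h
    by_cases hac : a = c
    · rw [← hac] at h5e h6e
      have hp1 : p = q + 1 := by
        have e : a * (p - (q + 1)) = 0 := by linear_combination h5e
        rcases mul_eq_zero.mp e with h' | h'
        · exact absurd h' (ne_of_gt ha)
        · linarith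
      rw [hp1] at h6e
      have e : b - a = 0 := by linear_combination h6e
      exact hbc (by rw [show b = a by linarith, hac])
    · rcases h1 with h | h1e
      · exact hac h
      rw [h1e] at h6e
      nlinarith [mul_pos hb hq]
  refine ⟨?_, hbc⟩
  by_cases hac : a = c
  · rw [hac, hbc]
  · exfalso
    rcases h1 with h | h1e
    · exact hac h
    have hpq : p + q = 1 := by
      rw [← hbc] at h1e
      have e : b * ((p + q) - 1) = 0 := by linear_combination -h1e
      rcases mul_eq_zero.mp e with h' | h'
      · exact absurd h' (ne_of_gt hb)
      · linarith
    rcases h2 with h | h2e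
    · exact hac h
    have e : (a - c) * (1 - q) = 0 := by linear_combination c * hpq - h2e
    rcases mul_eq_zero.mp e with h' | h'
    · exact hac (by linarith)
    · linarith

lemma caseC {p q a b c : ℝ} (hp : 0 < p) (hq : 0 < q) (ha : 0 < a) (hb : 0 < b) (hc : 0 < c)
    (h1 : a = c ∨ a = b * (p + q))
    (h2 : a = c ∨ a * q + c * p = c)
    (h3 : a = b ∨ c * (1 + p) = a * q)
    (h4 : a = b ∨ a + b * p = b * q) : a = b ∧ b = c := by
  have hab : a = b := by
    by_contra hab
    rcases h4 with h | h4e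
    · exact hab h
    rcases h3 with h | h3e
    · exact hab h
    by_cases hac : a = c
    · rw [← hac] at h3e
      have hq1 : q = 1 + p := by
        have e : a * (q - (1 + p)) = 0 := by linear_combination -h3e
        rcases mul_eq_zero.mp e with h' | h'
        · exact absurd h' (ne_of_gt ha)
        · linarith
      rw [hq1] at h4e
      have e : (a - b) * 1 = 0 := by linear_combination h4e
      exact hab (by linarith)
    · rcases h1 with h | h1e
      · exact hac h
      rw [h1e] at h4e
      nlinarith [mul_pos hb hp]
  refine ⟨hab, ?_⟩
  by_cases hac : a = c
  · rw [← hab, hac]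
  · exfalso
    rcases h1 with h | h1e
    · exact hac h
    have hpq : p + q = 1 := by
      rw [hab] at h1e
      have e : b * ((p + q) - 1) = 0 := by linear_combination -h1e
      rcases mul_eq_zero.mp e with h' | h'
      · exact absurd h' (ne_of_gt hb)
      · linarith
    rcases h2 with h | h2e
    · exact hac h
    have e : (a - c) * q = 0 := by linear_combination h2e - c * hpq
    rcases mul_eq_zero.mp e with h' | h'
    · exact hac (by linarith)
    · exact absurd h' (ne_of_gt hq)

lemma caseD {p q a b c : ℝ} (hp : 0 < p) (hq : 0 < q) (ha : 0 < a) (hb : 0 < b) (hc : 0 < c)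
    (h1 : a = c ∨ a = b * (p + q) ∨ c = b * (p + q))
    (h2 : a = c ∨ a * q + c * p = c ∨ a * q + c * p = a)
    (h3 : a = b ∨ c * (1 + p) = a * q ∨ c * (1 + p) = b * q)
    (h4 : a = b ∨ a + b * p = b * q ∨ a * q = a + b * p)
    (h5 : b = c ∨ c * p = a * (q + 1) ∨ a * (q + 1) = b * p)
    (h6 : b = c ∨ c = b * (p - q) ∨ b * q + c = c * p) : a = b ∧ b = c := by
  by_cases hab : a = b <;> by_cases hbc : b = c
  · exact ⟨hab, hbc⟩
  · -- Z : a = b, b ≠ c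
    exfalso
    rcases h1 with hac | h1b | h1c
    · exact hbc (hab.symm.trans hac)
    · -- a = b(p+q) with a = b forces p+q=1
      rw [hab] at h1b
      have hpq : p + q = 1 := by
        have e : b * ((p + q) - 1) = 0 := by linear_combination -h1b
        rcases mul_eq_zero.mp e with h' | h'
        · exact absurd h' (ne_of_gt hb)
        · linarith
      rcases h6 with h | h6b | h6c
      · exact hbc h
      · -- Z-b with c = b(p-q)
        rcases h2 with hac | h2b | h2c
        · exact hbc (hab.symm.trans hac)
        · rw [hab, h6b] at h2b
          have hq' : q = 1 - p := by linarith
          rw [hq'] at h2b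
          have e : b * ((p - 1) ^ 2) = 0 := by linear_combination h2b / 2
          rcases mul_eq_zero.mp e with h' | h'
          · exact absurd h' (ne_of_gt hb)
          · have : p = 1 := by nlinarith [sq_nonneg (p - 1)]
            rw [this] at hq'; linarith
        · rw [hab, h6b] at h2c
          have hq' : q = 1 - p := by linarith
          rw [hq'] at h2c
          have e : (b * p) * (p - 1) = 0 := by linear_combination h2c / 2
          rcases mul_eq_zero.mp e with h' | h'
          · exact absurd h' (ne_of_gt (mul_pos hb hp))
          · have : p = 1 := by linarith
            rw [this] at hq'; linarith
      · -- Z-b with bq + c = cp : c(p-1) = bq > 0 needs p > 1, but p < 1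
        nlinarith [mul_pos hb hq]
    · -- Z-a : c = b(p+q)
      rcases h6 with h | h6b | h6c
      · exact hbc h
      · have e : b * q * 2 = 0 := by linear_combination h6b - h1c
        nlinarith [mul_pos hb hq]
      · rw [h1c] at h6c
        rcases h2 with hac | h2b | h2c
        · exact hbc (hab.symm.trans hac)
        · rw [hab, h1c] at h2b
          have e : b * q * 2 = 0 := by linear_combination h6c + h2b
          nlinarith [mul_pos hb hq]
        · rw [hab, h1c] at h2c
          have e1 : b * (p + 3 * q) = b := by linear_combination h2c + h6c
          have hpq3 : p + 3 * q = 1 := by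
            have e : b * ((p + 3 * q) - 1) = 0 := by linear_combination e1
            rcases mul_eq_zero.mp e with h' | h'
            · exact absurd h' (ne_of_gt hb)
            · linarith
          -- h6c : b*q + b*(p+q) = b*(p+q)*p, so b(p+q)(p-1) = bq > 0 needs p > 1
          nlinarith [mul_pos hb hq, mul_pos (mul_pos hb (show (0:ℝ) < p + q by linarith)) hp]
  · -- Y : a ≠ b, b = c
    exfalso
    rcases h1 with hac | h1b | h1c
    · exact hab (hac.trans hbc.symm)
    · -- Y-a : a = b(p+q)
      rcases h4 with h | h4b | h4c
      · exact hab h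
      · rw [h1b] at h4b
        have e : b * p * 2 = 0 := by linear_combination h4b
        nlinarith [mul_pos hb hp]
      · rw [h1b] at h4c
        rcases h2 with hac | h2b | h2c
        · exact hab (hac.trans hbc.symm)
        · rw [h1b, ← hbc] at h2b
          have e1 : b * (3 * p + q) = b := by linear_combination h2b - h4c
          have hpq3 : 3 * p + q = 1 := by
            have e : b * ((3 * p + q) - 1) = 0 := by linear_combination e1
            rcases mul_eq_zero.mp e with h' | h'
            · exact absurd h' (ne_of_gt hb)
            · linarith
          -- h4c : b(p+q)q = b(p+q) + bp, so b(p+q)(q-1) = bp > 0 needs q > 1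
          nlinarith [mul_pos hb hp, mul_pos (mul_pos hb (show (0:ℝ) < p + q by linarith)) hq]
        · rw [h1b, ← hbc] at h2c
          have e : b * p * 2 = 0 := by linear_combination h2c - h4c
          nlinarith [mul_pos hb hp]
    · -- Y-b : c = b(p+q) with b = c forces p+q = 1
      rw [← hbc] at h1c
      have hpq : p + q = 1 := by
        have e : b * ((p + q) - 1) = 0 := by linear_combination -h1c
        rcases mul_eq_zero.mp e with h' | h'
        · exact absurd h' (ne_of_gt hb)
        · linarith
      rcases h4 with h | h4b | h4c
      · exact hab h
      · -- a = b(q - p)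
        rcases h2 with hac | h2b | h2c
        · exact hab (hac.trans hbc.symm)
        · rw [← hbc] at h2b
          have hpv : p = 1 - q := by linarith
          rw [hpv] at h2b h4b
          have e : b * q * (q - 1) * 2 = 0 := by linear_combination h2b - q * h4b
          have hq1 : q < 1 := by linarith
          nlinarith [mul_pos (mul_pos hb hq) (show (0:ℝ) < 1 - q by linarith)]
        · rw [← hbc] at h2c
          have hpv : p = 1 - q := by linarith
          have e : (a - b) * (q - 1) = 0 := by linear_combination h2c - b * hpv
          rcases mul_eq_zero.mp e with h' | h'
          · exact hab (by linarith)
          · rw [hpv] at hp; linarith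
      · -- a(q-1) = bp > 0 needs q > 1, contradiction with p + q = 1
        nlinarith [mul_pos hb hp]
  · -- X : a ≠ b, b ≠ c
    exfalso
    replace h4 := h4.resolve_left hab
    replace h3 := h3.resolve_left hab
    replace h6 := h6.resolve_left hbc
    replace h5 := h5.resolve_left hbc
    rcases h4 with h4e | h4e <;> rcases h6 with h6e | h6e <;>
      rcases h3 with h3e | h3e <;> rcases h5 with h5e | h5e <;>
      nlinarith [ha, hb, hc, hp, hq]
set_option maxHeartbeats 2000000 in
theorem stmt0 (α : Fin 3 → ℝ) (hα : ∀ i, 0 < α i)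
    (u : Fin 3 → ℝ × ℝ) (hu : ∀ i, u i ≠ 0)
    (hupper : ∀ i, 0 ≤ (u i).2)
    (h12 : 0 < cross (u 0) (u 1)) (h23 : 0 < cross (u 1) (u 2))
    (h13 : 0 < cross (u 0) (u 2))
    (hS1 : ∀ v : ℝ × ℝ, IsSole (fun _ => (1 : ℝ)) u v →
      ∃ w ∈ Sset α u, w ≠ 0 ∧ cross v w = 0)
    (hS2 : ∀ v : ℝ × ℝ, IsSole α u v →
      ∃ w ∈ Sset (fun _ => (1 : ℝ)) u, w ≠ 0 ∧ cross v w = 0) :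
    α 0 = α 1 ∧ α 1 = α 2 := by
  have hC : cross (u 0) (u 2) ≠ 0 := ne_of_gt h13
  set p : ℝ := cross (u 1) (u 2) / cross (u 0) (u 2) with hpdef
  set q : ℝ := cross (u 0) (u 1) / cross (u 0) (u 2) with hqdef
  have hp : 0 < p := div_pos h23 h13
  have hq : 0 < q := div_pos h12 h13
  have h2 : u 1 = p • u 0 + q • u 2 := by
    have key1 : (u 1).1 * cross (u 0) (u 2)
        = cross (u 1) (u 2) * (u 0).1 + cross (u 0) (u 1) * (u 2).1 := by
      simp only [cross]; ring
    have key2 : (u 1).2 * cross (u 0) (u 2)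
        = cross (u 1) (u 2) * (u 0).2 + cross (u 0) (u 1) * (u 2).2 := by
      simp only [cross]; ring
    have e1 : (u 1).1 = p * (u 0).1 + q * (u 2).1 := by
      rw [hpdef, hqdef]; field_simp; linear_combination key1
    have e2 : (u 1).2 = p * (u 0).2 + q * (u 2).2 := by
      rw [hpdef, hqdef]; field_simp; linear_combination key2
    have : (p • u 0 + q • u 2).1 = p * (u 0).1 + q * (u 2).1 := by
      simp [Prod.fst_add, Prod.smul_fst, smul_eq_mul]
    have h2' : (p • u 0 + q • u 2).2 = p * (u 0).2 + q * (u 2).2 := by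
      simp [Prod.snd_add, Prod.smul_snd, smul_eq_mul]
    exact Prod.ext (by rw [this]; exact e1) (by rw [h2']; exact e2)
  -- squared norms
  have hS0 : 0 < (u 0).1 ^ 2 + (u 0).2 ^ 2 := by
    have hne : (u 0).1 ≠ 0 ∨ (u 0).2 ≠ 0 := by
      by_contra hcon
      push_neg at hcon
      exact hu 0 (Prod.ext_iff.mpr ⟨hcon.1, hcon.2⟩)
    rcases hne with h | h
    · nlinarith [sq_nonneg (u 0).2, sq_nonneg (u 0).1, sq_eq_zero_iff.not.mpr h,
        lt_of_le_of_ne (sq_nonneg (u 0).1) (Ne.symm (pow_ne_zero 2 h))]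
    · nlinarith [sq_nonneg (u 0).1, lt_of_le_of_ne (sq_nonneg (u 0).2) (Ne.symm (pow_ne_zero 2 h))]
  have hS2' : 0 < (u 2).1 ^ 2 + (u 2).2 ^ 2 := by
    have hne : (u 2).1 ≠ 0 ∨ (u 2).2 ≠ 0 := by
      by_contra hcon
      push_neg at hcon
      exact hu 2 (Prod.ext_iff.mpr ⟨hcon.1, hcon.2⟩)
    rcases hne with h | h
    · nlinarith [sq_nonneg (u 2).2, lt_of_le_of_ne (sq_nonneg (u 2).1) (Ne.symm (pow_ne_zero 2 h))]
    · nlinarith [sq_nonneg (u 2).1, lt_of_le_of_ne (sq_nonneg (u 2).2) (Ne.symm (pow_ne_zero 2 h))]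
  have e01 : dot (u 0) (u 1)
      = p * ((u 0).1 ^ 2 + (u 0).2 ^ 2) + q * dot (u 0) (u 2) := by
    rw [h2]
    simp only [dot, Prod.fst_add, Prod.snd_add, Prod.smul_fst, Prod.smul_snd, smul_eq_mul]
    ring
  have e12 : dot (u 1) (u 2)
      = p * dot (u 0) (u 2) + q * ((u 2).1 ^ 2 + (u 2).2 ^ 2) := by
    rw [h2]
    simp only [dot, Prod.fst_add, Prod.snd_add, Prod.smul_fst, Prod.smul_snd, smul_eq_mul]
    ring
  have hLag : ((u 0).1 ^ 2 + (u 0).2 ^ 2) * ((u 2).1 ^ 2 + (u 2).2 ^ 2)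
      - (dot (u 0) (u 2)) ^ 2 = (cross (u 0) (u 2)) ^ 2 := by
    simp only [dot, cross]; ring
  have NE12 : ¬(dot (u 0) (u 1) = 0 ∧ dot (u 0) (u 2) = 0) := by
    rintro ⟨ha1, ha2⟩
    rw [ha2] at e01
    nlinarith [mul_pos hp hS0]
  have NE23 : ¬(dot (u 0) (u 2) = 0 ∧ dot (u 1) (u 2) = 0) := by
    rintro ⟨ha1, ha2⟩
    rw [ha1] at e12
    nlinarith [mul_pos hq hS2']
  have NE13 : ¬(dot (u 0) (u 1) = 0 ∧ dot (u 1) (u 2) = 0) := by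
    rintro ⟨ha1, ha2⟩
    have eq1 : p * ((u 0).1 ^ 2 + (u 0).2 ^ 2) + q * dot (u 0) (u 2) = 0 := by
      rw [← e01]; exact ha1
    have eq2 : p * dot (u 0) (u 2) + q * ((u 2).1 ^ 2 + (u 2).2 ^ 2) = 0 := by
      rw [← e12]; exact ha2
    have key : p * q * (((u 0).1 ^ 2 + (u 0).2 ^ 2) * ((u 2).1 ^ 2 + (u 2).2 ^ 2)
        - (dot (u 0) (u 2)) ^ 2) = 0 := by
      linear_combination (q * ((u 2).1 ^ 2 + (u 2).2 ^ 2)) * eq1 - (q * dot (u 0) (u 2)) * eq2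
    rw [hLag] at key
    nlinarith [mul_pos hp hq, pow_pos h13 2]
  -- Relation R3 : from sole vector u0 + u1 of S1
  have R3 : dot (u 0) (u 1) ≠ 0 →
      α 0 = α 1 ∨ (dot (u 0) (u 2) ≠ 0 ∧ α 2 * (1 + p) = α 0 * q)
        ∨ (dot (u 1) (u 2) ≠ 0 ∧ α 2 * (1 + p) = α 1 * q) := by
    intro hd
    obtain ⟨w, hw, -, hvw⟩ := hS1 _ (sole01 u p q hp hq h2 hC (fun _ => 1) (fun _ => one_pos) hd)
    have hvw' : cross ((1 + p) • u 0 + q • u 2) w = 0 := by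
      rw [show (1 + p) • u 0 + q • u 2 = ((1:ℝ)) • u 0 + ((1:ℝ)) • u 1 by rw [h2]; module]
      exact hvw
    rcases EXT u p q h2 hC α w hw (1 + p) q hvw'
      with e | e | e | ⟨hd', ε, ε', hε, hε', he⟩ | ⟨hd', ε, ε', hε, hε', he⟩ | ⟨hd', ε, ε', hε, hε', he⟩
    · exact absurd e (ne_of_gt hq)
    · exfalso; linarith
    · exfalso; nlinarith [hq]
    · rcases hε with rfl | rfl <;> rcases hε' with rfl | rfl
      · left
        have e0 : (α 1 - α 0) * q = 0 := by linear_combination he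
        rcases mul_eq_zero.mp e0 with h' | h'
        · linarith
        · exact absurd h' (ne_of_gt hq)
      · exfalso; nlinarith [mul_pos (hα 0) hq, mul_pos (hα 1) hq]
      · exfalso; nlinarith [mul_pos (hα 0) hq, mul_pos (hα 1) hq]
      · left
        have e0 : (α 0 - α 1) * q = 0 := by linear_combination he
        rcases mul_eq_zero.mp e0 with h' | h'
        · linarith
        · exact absurd h' (ne_of_gt hq)
    · rcases hε with rfl | rfl <;> rcases hε' with rfl | rfl
      · exact Or.inr (Or.inl ⟨hd', by linarith⟩)
      · exfalso; nlinarith [mul_pos (hα 0) hq, mul_pos (hα 2) hp, hα 2]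
      · exfalso; nlinarith [mul_pos (hα 0) hq, mul_pos (hα 2) hp, hα 2]
      · exact Or.inr (Or.inl ⟨hd', by linarith⟩)
    · rcases hε with rfl | rfl <;> rcases hε' with rfl | rfl
      · exfalso; nlinarith [mul_pos (hα 1) hq, mul_pos (hα 2) hp, hα 2]
      · exact Or.inr (Or.inr ⟨hd', by linarith⟩)
      · exact Or.inr (Or.inr ⟨hd', by linarith⟩)
      · exfalso; nlinarith [mul_pos (hα 1) hq, mul_pos (hα 2) hp, hα 2]
  -- Relation R4 : from sole vector α0 u0 + α1 u1 of S2
  have R4 : dot (u 0) (u 1) ≠ 0 →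
      α 0 = α 1 ∨ (dot (u 0) (u 2) ≠ 0 ∧ α 0 + α 1 * p = α 1 * q)
        ∨ (dot (u 1) (u 2) ≠ 0 ∧ α 0 * q = α 0 + α 1 * p) := by
    intro hd
    obtain ⟨w, hw, -, hvw⟩ := hS2 _ (sole01 u p q hp hq h2 hC α hα hd)
    have hvw' : cross ((α 0 + α 1 * p) • u 0 + (α 1 * q) • u 2) w = 0 := by
      rw [show (α 0 + α 1 * p) • u 0 + (α 1 * q) • u 2 = (α 0) • u 0 + (α 1) • u 1 by
        rw [h2]; module]
      exact hvw
    rcases EXT u p q h2 hC (fun _ => (1:ℝ)) w hw (α 0 + α 1 * p) (α 1 * q) hvw'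
      with e | e | e | ⟨hd', ε, ε', hε, hε', he⟩ | ⟨hd', ε, ε', hε, hε', he⟩ | ⟨hd', ε, ε', hε, hε', he⟩
    · exact absurd e (ne_of_gt (mul_pos (hα 1) hq))
    · exfalso; nlinarith [hα 0, mul_pos (hα 1) hp]
    · exfalso; nlinarith [mul_pos (hα 0) hq]
    · rcases hε with rfl | rfl <;> rcases hε' with rfl | rfl
      · left
        have e0 : (α 0 - α 1) * q = 0 := by linear_combination he
        rcases mul_eq_zero.mp e0 with h' | h'
        · linarith
        · exact absurd h' (ne_of_gt hq)
      · exfalso; nlinarith [mul_pos (hα 0) hq, mul_pos (hα 1) hq]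
      · exfalso; nlinarith [mul_pos (hα 0) hq, mul_pos (hα 1) hq]
      · left
        have e0 : (α 0 - α 1) * q = 0 := by linear_combination -he
        rcases mul_eq_zero.mp e0 with h' | h'
        · linarith
        · exact absurd h' (ne_of_gt hq)
    · rcases hε with rfl | rfl <;> rcases hε' with rfl | rfl
      · exact Or.inr (Or.inl ⟨hd', by linarith⟩)
      · exfalso; nlinarith [hα 0, mul_pos (hα 1) hp, mul_pos (hα 1) hq]
      · exfalso; nlinarith [hα 0, mul_pos (hα 1) hp, mul_pos (hα 1) hq]
      · exact Or.inr (Or.inl ⟨hd', by linarith⟩)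
    · rcases hε with rfl | rfl <;> rcases hε' with rfl | rfl
      · exfalso; nlinarith [mul_pos (hα 0) hq, hα 0, mul_pos (hα 1) hp]
      · exact Or.inr (Or.inr ⟨hd', by linarith⟩)
      · exact Or.inr (Or.inr ⟨hd', by linarith⟩)
      · exfalso; nlinarith [mul_pos (hα 0) hq, hα 0, mul_pos (hα 1) hp]
  -- Relation R5 : from sole vector u1 + u2 of S1
  have R5 : dot (u 1) (u 2) ≠ 0 →
      α 1 = α 2 ∨ (dot (u 0) (u 2) ≠ 0 ∧ α 2 * p = α 0 * (q + 1))
        ∨ (dot (u 0) (u 1) ≠ 0 ∧ α 0 * (q + 1) = α 1 * p) := by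
    intro hd
    obtain ⟨w, hw, -, hvw⟩ := hS1 _ (sole12 u p q hp hq h2 hC (fun _ => 1) (fun _ => one_pos) hd)
    have hvw' : cross (p • u 0 + (q + 1) • u 2) w = 0 := by
      rw [show p • u 0 + (q + 1) • u 2 = ((1:ℝ)) • u 1 + ((1:ℝ)) • u 2 by rw [h2]; module]
      exact hvw
    rcases EXT u p q h2 hC α w hw p (q + 1) hvw'
      with e | e | e | ⟨hd', ε, ε', hε, hε', he⟩ | ⟨hd', ε, ε', hε, hε', he⟩ | ⟨hd', ε, ε', hε, hε', he⟩
    · exfalso; linarith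
    · exfalso; linarith
    · exfalso; linarith
    · rcases hε with rfl | rfl <;> rcases hε' with rfl | rfl
      · exfalso; nlinarith [mul_pos (hα 0) hq, hα 0, mul_pos (hα 1) hp]
      · exact Or.inr (Or.inr ⟨hd', by linarith⟩)
      · exact Or.inr (Or.inr ⟨hd', by linarith⟩)
      · exfalso; nlinarith [mul_pos (hα 0) hq, hα 0, mul_pos (hα 1) hp]
    · rcases hε with rfl | rfl <;> rcases hε' with rfl | rfl
      · exact Or.inr (Or.inl ⟨hd', by linarith⟩)
      · exfalso; nlinarith [mul_pos (hα 2) hp, mul_pos (hα 0) hq, hα 0]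
      · exfalso; nlinarith [mul_pos (hα 2) hp, mul_pos (hα 0) hq, hα 0]
      · exact Or.inr (Or.inl ⟨hd', by linarith⟩)
    · rcases hε with rfl | rfl <;> rcases hε' with rfl | rfl
      · left
        have e0 : (α 2 - α 1) * p = 0 := by linear_combination he
        rcases mul_eq_zero.mp e0 with h' | h'
        · linarith
        · exact absurd h' (ne_of_gt hp)
      · exfalso; nlinarith [mul_pos (hα 1) hp, mul_pos (hα 2) hp]
      · exfalso; nlinarith [mul_pos (hα 1) hp, mul_pos (hα 2) hp]
      · left
        have e0 : (α 1 - α 2) * p = 0 := by linear_combination he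
        rcases mul_eq_zero.mp e0 with h' | h'
        · linarith
        · exact absurd h' (ne_of_gt hp)
  -- Relation R6 : from sole vector α1 u1 + α2 u2 of S2
  have R6 : dot (u 1) (u 2) ≠ 0 →
      α 1 = α 2 ∨ (dot (u 0) (u 2) ≠ 0 ∧ α 2 = α 1 * (p - q))
        ∨ (dot (u 0) (u 1) ≠ 0 ∧ α 1 * q + α 2 = α 2 * p) := by
    intro hd
    obtain ⟨w, hw, -, hvw⟩ := hS2 _ (sole12 u p q hp hq h2 hC α hα hd)
    have hvw' : cross ((α 1 * p) • u 0 + (α 1 * q + α 2) • u 2) w = 0 := by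
      rw [show (α 1 * p) • u 0 + (α 1 * q + α 2) • u 2 = (α 1) • u 1 + (α 2) • u 2 by
        rw [h2]; module]
      exact hvw
    rcases EXT u p q h2 hC (fun _ => (1:ℝ)) w hw (α 1 * p) (α 1 * q + α 2) hvw'
      with e | e | e | ⟨hd', ε, ε', hε, hε', he⟩ | ⟨hd', ε, ε', hε, hε', he⟩ | ⟨hd', ε, ε', hε, hε', he⟩
    · exfalso; nlinarith [mul_pos (hα 1) hq, hα 2]
    · exact absurd e (ne_of_gt (mul_pos (hα 1) hp))
    · exfalso; nlinarith [mul_pos (hα 2) hp]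
    · rcases hε with rfl | rfl <;> rcases hε' with rfl | rfl
      · exfalso; nlinarith [mul_pos (hα 1) hq, hα 2, mul_pos (hα 2) hp]
      · exact Or.inr (Or.inr ⟨hd', by linarith⟩)
      · exact Or.inr (Or.inr ⟨hd', by linarith⟩)
      · exfalso; nlinarith [mul_pos (hα 1) hq, hα 2, mul_pos (hα 2) hp]
    · rcases hε with rfl | rfl <;> rcases hε' with rfl | rfl
      · exact Or.inr (Or.inl ⟨hd', by linarith⟩)
      · exfalso; nlinarith [mul_pos (hα 1) hp, mul_pos (hα 1) hq, hα 2]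
      · exfalso; nlinarith [mul_pos (hα 1) hp, mul_pos (hα 1) hq, hα 2]
      · exact Or.inr (Or.inl ⟨hd', by linarith⟩)
    · rcases hε with rfl | rfl <;> rcases hε' with rfl | rfl
      · left
        have e0 : (α 1 - α 2) * p = 0 := by linear_combination he
        rcases mul_eq_zero.mp e0 with h' | h'
        · linarith
        · exact absurd h' (ne_of_gt hp)
      · exfalso; nlinarith [mul_pos (hα 1) hp, mul_pos (hα 2) hp]
      · exfalso; nlinarith [mul_pos (hα 1) hp, mul_pos (hα 2) hp]
      · left
        have e0 : (α 2 - α 1) * p = 0 := by linear_combination he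
        rcases mul_eq_zero.mp e0 with h' | h'
        · linarith
        · exact absurd h' (ne_of_gt hp)
  -- Relation R1 : from sole vector u0 - u2 of S1
  have R1 : dot (u 0) (u 2) ≠ 0 →
      α 0 = α 2 ∨ (dot (u 0) (u 1) ≠ 0 ∧ α 0 = α 1 * (p + q))
        ∨ (dot (u 1) (u 2) ≠ 0 ∧ α 2 = α 1 * (p + q)) := by
    intro hd
    obtain ⟨w, hw, -, hvw⟩ := hS1 _ (sole02 u p q hp hq h2 hC (fun _ => 1) (fun _ => one_pos) hd)
    rcases EXT u p q h2 hC α w hw 1 (-(1:ℝ)) hvw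
      with e | e | e | ⟨hd', ε, ε', hε, hε', he⟩ | ⟨hd', ε, ε', hε, hε', he⟩ | ⟨hd', ε, ε', hε, hε', he⟩
    · exfalso; linarith
    · exfalso; linarith
    · exfalso; nlinarith [hp, hq]
    · rcases hε with rfl | rfl <;> rcases hε' with rfl | rfl
      · exfalso; nlinarith [mul_pos (hα 1) hq, hα 0, mul_pos (hα 1) hp]
      · exact Or.inr (Or.inl ⟨hd', by linarith⟩)
      · exact Or.inr (Or.inl ⟨hd', by linarith⟩)
      · exfalso; nlinarith [mul_pos (hα 1) hq, hα 0, mul_pos (hα 1) hp]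
    · rcases hε with rfl | rfl <;> rcases hε' with rfl | rfl
      · exfalso; nlinarith [hα 0, hα 2]
      · left; linarith
      · left; linarith
      · exfalso; nlinarith [hα 0, hα 2]
    · rcases hε with rfl | rfl <;> rcases hε' with rfl | rfl
      · exfalso; nlinarith [mul_pos (hα 1) hq, hα 2, mul_pos (hα 1) hp]
      · exact Or.inr (Or.inr ⟨hd', by linarith⟩)
      · exact Or.inr (Or.inr ⟨hd', by linarith⟩)
      · exfalso; nlinarith [mul_pos (hα 1) hq, hα 2, mul_pos (hα 1) hp]
  -- Relation R2 : from sole vector α0 u0 - α2 u2 of S2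
  have R2 : dot (u 0) (u 2) ≠ 0 →
      α 0 = α 2 ∨ (dot (u 0) (u 1) ≠ 0 ∧ α 0 * q + α 2 * p = α 2)
        ∨ (dot (u 1) (u 2) ≠ 0 ∧ α 0 * q + α 2 * p = α 0) := by
    intro hd
    obtain ⟨w, hw, -, hvw⟩ := hS2 _ (sole02 u p q hp hq h2 hC α hα hd)
    rcases EXT u p q h2 hC (fun _ => (1:ℝ)) w hw (α 0) (-(α 2)) hvw
      with e | e | e | ⟨hd', ε, ε', hε, hε', he⟩ | ⟨hd', ε, ε', hε, hε', he⟩ | ⟨hd', ε, ε', hε, hε', he⟩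
    · exfalso; nlinarith [hα 2]
    · exact absurd e (ne_of_gt (hα 0))
    · exfalso; nlinarith [mul_pos (hα 0) hq, mul_pos (hα 2) hp]
    · rcases hε with rfl | rfl <;> rcases hε' with rfl | rfl
      · exfalso; nlinarith [mul_pos (hα 0) hq, hα 2, mul_pos (hα 2) hp]
      · exact Or.inr (Or.inl ⟨hd', by linarith⟩)
      · exact Or.inr (Or.inl ⟨hd', by linarith⟩)
      · exfalso; nlinarith [mul_pos (hα 0) hq, hα 2, mul_pos (hα 2) hp]
    · rcases hε with rfl | rfl <;> rcases hε' with rfl | rfl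
      · exfalso; nlinarith [hα 0, hα 2]
      · left; linarith
      · left; linarith
      · exfalso; nlinarith [hα 0, hα 2]
    · rcases hε with rfl | rfl <;> rcases hε' with rfl | rfl
      · exfalso; nlinarith [mul_pos (hα 0) hq, hα 0, mul_pos (hα 2) hp]
      · exact Or.inr (Or.inr ⟨hd', by linarith⟩)
      · exact Or.inr (Or.inr ⟨hd', by linarith⟩)
      · exfalso; nlinarith [mul_pos (hα 0) hq, hα 0, mul_pos (hα 2) hp]
  -- Final case analysis on which dot products vanish
  by_cases hz01 : dot (u 0) (u 1) = 0
  · have hn02 : dot (u 0) (u 2) ≠ 0 := fun h => NE12 ⟨hz01, h⟩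
    have hn12 : dot (u 1) (u 2) ≠ 0 := fun h => NE13 ⟨hz01, h⟩
    have h1' : α 0 = α 2 ∨ α 2 = α 1 * (p + q) := by
      rcases R1 hn02 with h | ⟨hd, _⟩ | ⟨_, e⟩
      · exact Or.inl h
      · exact absurd hz01 hd
      · exact Or.inr e
    have h2' : α 0 = α 2 ∨ α 0 * q + α 2 * p = α 0 := by
      rcases R2 hn02 with h | ⟨hd, _⟩ | ⟨_, e⟩
      · exact Or.inl h
      · exact absurd hz01 hd
      · exact Or.inr e
    have h5' : α 1 = α 2 ∨ α 2 * p = α 0 * (q + 1) := by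
      rcases R5 hn12 with h | ⟨_, e⟩ | ⟨hd, _⟩
      · exact Or.inl h
      · exact Or.inr e
      · exact absurd hz01 hd
    have h6' : α 1 = α 2 ∨ α 1 * p = α 1 * q + α 2 := by
      rcases R6 hn12 with h | ⟨_, e⟩ | ⟨hd, _⟩
      · exact Or.inl h
      · exact Or.inr (by linarith)
      · exact absurd hz01 hd
    exact caseB hp hq (hα 0) (hα 1) (hα 2) h1' h2' h5' h6'
  · by_cases hz12 : dot (u 1) (u 2) = 0
    · have hn02 : dot (u 0) (u 2) ≠ 0 := fun h => NE23 ⟨h, hz12⟩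
      have h1' : α 0 = α 2 ∨ α 0 = α 1 * (p + q) := by
        rcases R1 hn02 with h | ⟨_, e⟩ | ⟨hd, _⟩
        · exact Or.inl h
        · exact Or.inr e
        · exact absurd hz12 hd
      have h2' : α 0 = α 2 ∨ α 0 * q + α 2 * p = α 2 := by
        rcases R2 hn02 with h | ⟨_, e⟩ | ⟨hd, _⟩
        · exact Or.inl h
        · exact Or.inr e
        · exact absurd hz12 hd
      have h3' : α 0 = α 1 ∨ α 2 * (1 + p) = α 0 * q := by
        rcases R3 hz01 with h | ⟨_, e⟩ | ⟨hd, _⟩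
        · exact Or.inl h
        · exact Or.inr e
        · exact absurd hz12 hd
      have h4' : α 0 = α 1 ∨ α 0 + α 1 * p = α 1 * q := by
        rcases R4 hz01 with h | ⟨_, e⟩ | ⟨hd, _⟩
        · exact Or.inl h
        · exact Or.inr e
        · exact absurd hz12 hd
      exact caseC hp hq (hα 0) (hα 1) (hα 2) h1' h2' h3' h4'
    · by_cases hz02 : dot (u 0) (u 2) = 0
      · have h3' : α 0 = α 1 ∨ α 2 * (1 + p) = α 1 * q := by
          rcases R3 hz01 with h | ⟨hd, _⟩ | ⟨_, e⟩
          · exact Or.inl h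
          · exact absurd hz02 hd
          · exact Or.inr e
        have h4' : α 0 = α 1 ∨ α 0 * q = α 0 + α 1 * p := by
          rcases R4 hz01 with h | ⟨hd, _⟩ | ⟨_, e⟩
          · exact Or.inl h
          · exact absurd hz02 hd
          · exact Or.inr e
        have h5' : α 1 = α 2 ∨ α 0 * (q + 1) = α 1 * p := by
          rcases R5 hz12 with h | ⟨hd, _⟩ | ⟨_, e⟩
          · exact Or.inl h
          · exact absurd hz02 hd
          · exact Or.inr e
        have h6' : α 1 = α 2 ∨ α 1 * q + α 2 = α 2 * p := by
          rcases R6 hz12 with h | ⟨hd, _⟩ | ⟨_, e⟩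
          · exact Or.inl h
          · exact absurd hz02 hd
          · exact Or.inr e
        exact caseA hp hq (hα 0) (hα 1) (hα 2) h3' h4' h5' h6'
      · have h1' := (R1 hz02).imp id (Or.imp And.right And.right)
        have h2' := (R2 hz02).imp id (Or.imp And.right And.right)
        have h3' := (R3 hz01).imp id (Or.imp And.right And.right)
        have h4' := (R4 hz01).imp id (Or.imp And.right And.right)
        have h5' := (R5 hz12).imp id (Or.imp And.right And.right)
        have h6' := (R6 hz12).imp id (Or.imp And.right And.right)
        exact caseD hp hq (hα 0) (hα 1) (hα 2) h1' h2' h3' h4' h5' h6'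
end
end

section
/- Let r1, r2, r3 > 0 be real numbers and α1, α2 ∈ ℚ. Then M(t) ≤ r1 + r2 + r3 for all t ∈ ℝ, and M(t) = r1 + r2 + r3 if and only if t = 2mπ + 2m1 α1 π + 2m2 α2 π for some integers m, m1, m2. -/
/-!
Each of the three terms is at most its amplitude, so `M t ≤ r₁ + r₂ + r₃`, with equality at a
point `(θ₁, θ₂)` exactly when all three cosines equal `1`; solving `θ₁, θ₂ ∈ 2πℤ` and
`α₁θ₁ + α₂θ₂ + t ∈ 2πℤ` gives the lattice of the statement. The rationality of `α₁, α₂` is what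
makes the supremum a maximum: the function is then `2π·den α₁·den α₂`-periodic in each variable,
so its supremum over the plane is its maximum over a compact square.
-/

noncomputable section

open Real

/-- `M t = sup_{θ₁, θ₂ ∈ ℝ} [ r₁ cos θ₁ + r₂ cos θ₂ + r₃ cos(α₁ θ₁ + α₂ θ₂ + t) ]`. -/
def M (r1 r2 r3 : ℝ) (α1 α2 : ℚ) (t : ℝ) : ℝ :=
  sSup {v : ℝ | ∃ θ1 θ2 : ℝ,
    v = r1 * cos θ1 + r2 * cos θ2 + r3 * cos ((α1 : ℝ) * θ1 + (α2 : ℝ) * θ2 + t)}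

open Function Set

theorem Continuous.exists_forall_ge_of_periodic₂ {α : Type*} [LinearOrder α]
    [TopologicalSpace α] [ClosedIciTopology α] {f : ℝ → ℝ → α} (hf : Continuous (uncurry f))
    {c₁ c₂ : ℝ} (hc₁ : 0 < c₁) (hc₂ : 0 < c₂) (h₁ : ∀ y, Periodic (f · y) c₁)
    (h₂ : ∀ x, Periodic (f x) c₂) :
    ∃ a b, ∀ x y, f x y ≤ f a b := by
  obtain ⟨⟨a, b⟩, -, hmax⟩ := (isCompact_Icc.prod isCompact_Icc).exists_isMaxOn
    ((nonempty_Icc.2 hc₁.le).prod (nonempty_Icc.2 hc₂.le)) hf.continuousOn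
  refine ⟨a, b, fun x y => ?_⟩
  obtain ⟨x', hx', hx⟩ := (h₁ y).exists_mem_Ico₀ hc₁ x
  obtain ⟨y', hy', hy⟩ := (h₂ x').exists_mem_Ico₀ hc₂ y
  rw [hx, hy]
  exact hmax (mk_mem_prod (Ico_subset_Icc_self hx') (Ico_subset_Icc_self hy'))

theorem Real.cos_rat_mul_add_periodic (q : ℚ) (c : ℝ) :
    Periodic (fun θ => cos (q * θ + c)) (2 * π * q.den) := fun θ => by
  have : (q : ℝ) * (θ + 2 * π * q.den) + c = q * θ + c + q.num * (2 * π) := by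
    rw [← Rat.cast_natCast, ← Rat.cast_intCast, ← Rat.mul_den_eq_num]
    push_cast
    ring
  simp only [this, cos_add_int_mul_two_pi]

def cosSum (r1 r2 r3 α1 α2 t θ1 θ2 : ℝ) : ℝ :=
  r1 * cos θ1 + r2 * cos θ2 + r3 * cos (α1 * θ1 + α2 * θ2 + t)

theorem cosSum_le {r1 r2 r3 : ℝ} (hr1 : 0 ≤ r1) (hr2 : 0 ≤ r2) (hr3 : 0 ≤ r3)
    (α1 α2 t θ1 θ2 : ℝ) :
    cosSum r1 r2 r3 α1 α2 t θ1 θ2 ≤ r1 + r2 + r3 := by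
  unfold cosSum
  gcongr <;> exact mul_le_of_le_one_right ‹_› (cos_le_one _)

theorem cosSum_eq_add_iff {r1 r2 r3 : ℝ} (hr1 : 0 < r1) (hr2 : 0 < r2) (hr3 : 0 < r3)
    (α1 α2 t θ1 θ2 : ℝ) :
    cosSum r1 r2 r3 α1 α2 t θ1 θ2 = r1 + r2 + r3 ↔
      cos θ1 = 1 ∧ cos θ2 = 1 ∧ cos (α1 * θ1 + α2 * θ2 + t) = 1 := by
  refine ⟨fun h => ?_, fun ⟨h1, h2, h3⟩ => by simp [cosSum, h1, h2, h3]⟩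
  unfold cosSum at h
  have := cos_le_one θ1
  have := cos_le_one θ2
  have := cos_le_one (α1 * θ1 + α2 * θ2 + t)
  refine ⟨?_, ?_, ?_⟩ <;> nlinarith

theorem cosSum_exists_forall_ge (r1 r2 r3 : ℝ) (α1 α2 : ℚ) (t : ℝ) :
    ∃ a b, ∀ θ1 θ2, cosSum r1 r2 r3 α1 α2 t θ1 θ2 ≤ cosSum r1 r2 r3 α1 α2 t a b := by
  have hpos : 0 < 2 * π * α1.den * α2.den := by positivity
  refine Continuous.exists_forall_ge_of_periodic₂ (by unfold cosSum; fun_prop) hpos hpos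
    (fun θ2 θ1 => ?_) (fun θ1 θ2 => ?_)
  · have h1 := (cos_periodic.nat_mul (α1.den * α2.den)) θ1
    have h3 := ((cos_rat_mul_add_periodic α1 (α2 * θ2 + t)).nat_mul α2.den) θ1
    push_cast at h1 h3
    simp only [cosSum]
    linear_combination (norm := ring_nf) r1 * h1 + r3 * h3
  · have h2 := (cos_periodic.nat_mul (α1.den * α2.den)) θ2
    have h3 := ((cos_rat_mul_add_periodic α2 (α1 * θ1 + t)).nat_mul α1.den) θ2
    push_cast at h2 h3
    simp only [cosSum]
    linear_combination (norm := ring_nf) r2 * h2 + r3 * h3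

theorem exists_cos_eq_one_iff (α1 α2 t : ℝ) :
    (∃ θ1 θ2, cos θ1 = 1 ∧ cos θ2 = 1 ∧ cos (α1 * θ1 + α2 * θ2 + t) = 1) ↔
      ∃ m m1 m2 : ℤ, t = 2 * (m : ℝ) * π + 2 * (m1 : ℝ) * α1 * π + 2 * (m2 : ℝ) * α2 * π := by
  simp only [cos_eq_one_iff]
  constructor
  · rintro ⟨_, _, ⟨n1, rfl⟩, ⟨n2, rfl⟩, ⟨m, hm⟩⟩
    exact ⟨m, -n1, -n2, by push_cast; linarith⟩
  · rintro ⟨m, m1, m2, rfl⟩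
    exact ⟨_, _, ⟨-m1, rfl⟩, ⟨-m2, rfl⟩, ⟨m, by push_cast; ring⟩⟩

theorem M_le {r1 r2 r3 : ℝ} (hr1 : 0 ≤ r1) (hr2 : 0 ≤ r2) (hr3 : 0 ≤ r3) (α1 α2 : ℚ) (t : ℝ) :
    M r1 r2 r3 α1 α2 t ≤ r1 + r2 + r3 :=
  csSup_le ⟨_, 0, 0, rfl⟩ (by rintro _ ⟨θ1, θ2, rfl⟩; exact cosSum_le hr1 hr2 hr3 α1 α2 t θ1 θ2)

theorem M_eq_add_iff {r1 r2 r3 : ℝ} (hr1 : 0 ≤ r1) (hr2 : 0 ≤ r2) (hr3 : 0 ≤ r3) (α1 α2 : ℚ)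
    (t : ℝ) :
    M r1 r2 r3 α1 α2 t = r1 + r2 + r3 ↔
      ∃ θ1 θ2, cosSum r1 r2 r3 α1 α2 t θ1 θ2 = r1 + r2 + r3 := by
  have hle := cosSum_le hr1 hr2 hr3 α1 α2 t
  constructor
  · intro h
    obtain ⟨a, b, hmax⟩ := cosSum_exists_forall_ge r1 r2 r3 α1 α2 t
    refine ⟨a, b, (hle a b).antisymm (h ▸ csSup_le ⟨_, 0, 0, rfl⟩ ?_)⟩
    rintro _ ⟨θ1, θ2, rfl⟩
    exact hmax θ1 θ2
  · rintro ⟨a, b, h⟩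
    refine (M_le hr1 hr2 hr3 α1 α2 t).antisymm (h ▸ le_csSup ⟨r1 + r2 + r3, ?_⟩ ⟨a, b, rfl⟩)
    rintro _ ⟨θ1, θ2, rfl⟩
    exact hle θ1 θ2

theorem stmt2 (r1 r2 r3 : ℝ) (hr1 : 0 < r1) (hr2 : 0 < r2) (hr3 : 0 < r3)
    (α1 α2 : ℚ) :
    (∀ t : ℝ, M r1 r2 r3 α1 α2 t ≤ r1 + r2 + r3) ∧
    (∀ t : ℝ, M r1 r2 r3 α1 α2 t = r1 + r2 + r3 ↔
      ∃ m m1 m2 : ℤ, t = 2 * (m : ℝ) * π + 2 * (m1 : ℝ) * (α1 : ℝ) * π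
        + 2 * (m2 : ℝ) * (α2 : ℝ) * π) := by
  refine ⟨M_le hr1.le hr2.le hr3.le α1 α2, fun t => ?_⟩
  rw [M_eq_add_iff hr1.le hr2.le hr3.le]
  simp only [cosSum_eq_add_iff hr1 hr2 hr3]
  exact exists_cos_eq_one_iff α1 α2 t
end
end

section
/- Let r1, r2, r3 > 0 be real numbers and α1, α2 ∈ ℚ. Every local maximum of M is a global maximum: if t0 ∈ ℝ and there exists δ > 0 such that M(t) ≤ M(t0) for all t with |t − t0| < δ, then M(t0) = r1 + r2 + r3 = sup_{t∈ℝ} M(t). -/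
/-!
Call `f : ℝ → ℝ` unimodal with period `p` if `f x` is a strictly decreasing function of the
distance from `x` to `pℤ`. Such a function attains its maximum exactly on `pℤ` and has no
other local maxima: moving a point straight towards the nearest lattice point increases `f`.

Substituting `u = -α θ` turns `θ ↦ r cos θ` into the unimodal function `u ↦ r cos (u / α)`
of period `2πα`, and `M` into an iterated sup-convolution `t ↦ sup_u f u + g (t - u)`. If
`f`, `g` are unimodal with periods `a`, `b` and `aℤ + bℤ = cℤ`, the sup-convolution is
unimodal with period `c`: an optimal splitting `x = u + (x - u)` has defect at least the
distance from `x` to `cℤ`, and any point `y` closer to `cℤ` than `x` admits a splitting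
whose two defects are at most those of `u` and `x - u`, at least one of them strictly when
`y` is strictly closer. The `αᵢ` are rational, so all periods involved are rational multiples
of `2π`, any two of them generate a cyclic group, and `M` is unimodal.
-/

noncomputable section

open Real

open Function Set Filter Topology
open AddSubgroup (zmultiples mem_zmultiples mem_zmultiples_iff)

namespace AddCircle

theorem norm_coe_le_abs_sub_int_mul (p x : ℝ) (k : ℤ) : ‖(x : AddCircle p)‖ ≤ |x - k * p| := by
  have : ((x - k * p : ℝ) : AddCircle p) = x := by
    rw [coe_sub, sub_eq_self, ← zsmul_eq_mul, coe_zsmul, coe_period, smul_zero]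
  rw [← this]
  exact QuotientAddGroup.norm_mk_le_norm

theorem norm_coe_le_of_zmultiples_le {p q : ℝ} (h : zmultiples p ≤ zmultiples q) (x : ℝ) :
    ‖(x : AddCircle q)‖ ≤ ‖(x : AddCircle p)‖ := by
  rw [QuotientAddGroup.norm_mk, QuotientAddGroup.norm_mk]
  exact Metric.infDist_le_infDist_of_subset h ⟨0, zero_mem _⟩

theorem cos_norm_coe_two_pi (x : ℝ) : cos ‖(x : AddCircle (2 * π))‖ = cos x := by
  rw [norm_eq, cos_abs, cos_sub_int_mul_two_pi]

theorem norm_coe_two_pi_mem_Icc (x : ℝ) : ‖(x : AddCircle (2 * π))‖ ∈ Icc 0 π := by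
  refine ⟨norm_nonneg _, (norm_le_half_period _ two_pi_pos.ne').trans_eq ?_⟩
  rw [abs_of_pos two_pi_pos]
  ring

end AddCircle

theorem exists_add_eq_of_abs_le_add {w A B : ℝ} (hA : 0 ≤ A) (hB : 0 ≤ B) (hw : |w| ≤ A + B) :
    ∃ w₁ w₂, w₁ + w₂ = w ∧ |w₁| ≤ A ∧ |w₂| ≤ B ∧ |w₁| + |w₂| = |w| := by
  rcases (add_nonneg hA hB).eq_or_lt with h0 | hpos
  · obtain rfl : w = 0 := abs_nonpos_iff.mp (hw.trans h0.ge)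
    exact ⟨0, 0, by simp, by simpa, by simpa, by simp⟩
  · have hA' : A / (A + B) * (A + B) = A := div_mul_cancel₀ A hpos.ne'
    have hB' : B / (A + B) * (A + B) = B := div_mul_cancel₀ B hpos.ne'
    refine ⟨A / (A + B) * w, B / (A + B) * w, ?_, ?_, ?_, ?_⟩
    · rw [← add_mul, ← add_div, div_self hpos.ne', one_mul]
    · rw [abs_mul, abs_of_nonneg (by positivity)]
      exact (mul_le_mul_of_nonneg_left hw (by positivity)).trans hA'.le
    · rw [abs_mul, abs_of_nonneg (by positivity)]
      exact (mul_le_mul_of_nonneg_left hw (by positivity)).trans hB'.le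
    · rw [abs_mul, abs_mul, abs_of_nonneg (by positivity), abs_of_nonneg (a := B / (A + B))
        (by positivity), ← add_mul, ← add_div, div_self hpos.ne', one_mul]

theorem exists_norm_coe_le_of_zmultiples_sup_eq {a b c : ℝ}
    (hc : zmultiples a ⊔ zmultiples b = zmultiples c) {x A B : ℝ} (hA : 0 ≤ A) (hB : 0 ≤ B)
    (hx : ‖(x : AddCircle c)‖ ≤ A + B) :
    ∃ v : ℝ, ‖(v : AddCircle a)‖ ≤ A ∧ ‖((x - v : ℝ) : AddCircle b)‖ ≤ B ∧
      ‖(v : AddCircle a)‖ + ‖((x - v : ℝ) : AddCircle b)‖ ≤ ‖(x : AddCircle c)‖ := by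
  obtain ⟨k, hk⟩ : ∃ k : ℤ, ‖(x : AddCircle c)‖ = |x - k * c| := ⟨_, AddCircle.norm_eq c⟩
  have hkc : k • c ∈ zmultiples a ⊔ zmultiples b := hc ▸ zsmul_mem (mem_zmultiples c) k
  obtain ⟨_, ⟨m, rfl⟩, _, ⟨n, rfl⟩, hmn⟩ := AddSubgroup.mem_sup.mp hkc
  simp only [zsmul_eq_mul] at hmn
  obtain ⟨w₁, w₂, hw, hw₁, hw₂, hsum⟩ := exists_add_eq_of_abs_le_add hA hB (hk ▸ hx)
  have h₁ : ‖((m * a + w₁ : ℝ) : AddCircle a)‖ ≤ |w₁| := by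
    simpa using AddCircle.norm_coe_le_abs_sub_int_mul a (m * a + w₁) m
  have h₂ : ‖((x - (m * a + w₁) : ℝ) : AddCircle b)‖ ≤ |w₂| := by
    have : x - (m * a + w₁) - n * b = w₂ := by linear_combination (-1 : ℝ) * hw - hmn
    simpa [this] using AddCircle.norm_coe_le_abs_sub_int_mul b (x - (m * a + w₁)) n
  exact ⟨m * a + w₁, h₁.trans hw₁, h₂.trans hw₂, by linarith⟩

theorem exists_ne_zero_mem_zmultiples_of_sup_eq {a b c : ℝ}
    (hc : zmultiples a ⊔ zmultiples b = zmultiples c) (ha : a ≠ 0) (hb : b ≠ 0) :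
    ∃ P ≠ 0, P ∈ zmultiples a ∧ P ∈ zmultiples b := by
  obtain ⟨i, hi⟩ := mem_zmultiples_iff.mp (hc ▸ AddSubgroup.mem_sup_left (mem_zmultiples a))
  obtain ⟨j, hj⟩ := mem_zmultiples_iff.mp (hc ▸ AddSubgroup.mem_sup_right (mem_zmultiples b))
  have hj0 : j ≠ 0 := by rintro rfl; exact hb (by simpa using hj.symm)
  refine ⟨j • a, smul_ne_zero hj0 ha, zsmul_mem (mem_zmultiples a) j, i, ?_⟩
  rw [← hi, ← hj, smul_comm]

theorem exists_zmultiples_sup_eq_rat_mul (s : ℝ) {x : ℚ} (hx : x ≠ 0) (y : ℚ) :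
    ∃ z : ℚ, z ≠ 0 ∧ zmultiples ((x : ℝ) * s) ⊔ zmultiples ((y : ℝ) * s) = zmultiples (z * s) := by
  set X := x.num * y.den
  set Y := y.num * x.den
  let φ : ℤ →+ ℝ := (AddMonoidHom.mulRight (s / (x.den * y.den))).comp (Int.castAddHom ℝ)
  have hφ (n : ℤ) : φ n = n * (s / (x.den * y.den)) := rfl
  have hX : (x : ℝ) * s = φ X := by
    rw [hφ, Rat.cast_def]; push_cast [X]; field_simp
  have hY : (y : ℝ) * s = φ Y := by
    rw [hφ, Rat.cast_def]; push_cast [Y]; field_simp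
  have hg : X.gcd Y ≠ 0 :=
    (Int.gcd_pos_of_ne_zero_left Y (mul_ne_zero (Rat.num_ne_zero.mpr hx) (by simp))).ne'
  refine ⟨X.gcd Y / (x.den * y.den), by positivity, ?_⟩
  rw [hX, hY, ← AddMonoidHom.map_zmultiples, ← AddMonoidHom.map_zmultiples,
    ← AddSubgroup.map_sup, Int.zmultiples_sup, AddMonoidHom.map_zmultiples, hφ]
  congr 1
  push_cast
  ring

theorem Function.Periodic.exists_forall_le_of_continuous {F : ℝ → ℝ} {P : ℝ} (hF : Periodic F P)
    (hP : P ≠ 0) (hc : Continuous F) : ∃ u, ∀ v, F v ≤ F u := by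
  obtain ⟨_, ⟨u, rfl⟩, hu⟩ := (hF.compact_of_continuous hP hc).exists_isGreatest (range_nonempty F)
  exact ⟨u, fun v => hu ⟨v, rfl⟩⟩

def IsUnimodal (p : ℝ) (f : ℝ → ℝ) : Prop :=
  ∀ x y : ℝ, f x ≤ f y ↔ ‖(y : AddCircle p)‖ ≤ ‖(x : AddCircle p)‖

theorem isUnimodal_cos : IsUnimodal (2 * π) cos := fun x y => by
  rw [← AddCircle.cos_norm_coe_two_pi x, ← AddCircle.cos_norm_coe_two_pi y]
  exact strictAntiOn_cos.le_iff_ge (AddCircle.norm_coe_two_pi_mem_Icc x)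
    (AddCircle.norm_coe_two_pi_mem_Icc y)

namespace IsUnimodal

variable {p : ℝ} {f g : ℝ → ℝ}

theorem of_le_and_lt
    (h : ∀ x y : ℝ, ‖(y : AddCircle p)‖ ≤ ‖(x : AddCircle p)‖ →
      f x ≤ f y ∧ (‖(y : AddCircle p)‖ < ‖(x : AddCircle p)‖ → f x < f y)) :
    IsUnimodal p f :=
  fun x y => ⟨fun hxy => not_lt.mp fun hlt => ((h y x hlt.le).2 hlt).not_ge hxy,
    fun hxy => (h x y hxy).1⟩

theorem lt_iff (hf : IsUnimodal p f) (x y : ℝ) :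
    f x < f y ↔ ‖(y : AddCircle p)‖ < ‖(x : AddCircle p)‖ := by
  simpa only [not_le] using (hf y x).not

theorem apply_eq_of_norm_eq (hf : IsUnimodal p f) {x y : ℝ}
    (h : ‖(x : AddCircle p)‖ = ‖(y : AddCircle p)‖) : f x = f y :=
  le_antisymm ((hf x y).2 h.ge) ((hf y x).2 h.le)

theorem le_apply_zero (hf : IsUnimodal p f) (x : ℝ) : f x ≤ f 0 :=
  (hf x 0).2 (by simp)

theorem iSup_eq_apply_zero (hf : IsUnimodal p f) : ⨆ x, f x = f 0 :=
  ciSup_eq_of_forall_le_of_forall_lt_exists_gt hf.le_apply_zero fun _ h => ⟨0, h⟩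

theorem periodic_of_mem_zmultiples (hf : IsUnimodal p f) {P : ℝ} (hP : P ∈ zmultiples p) :
    Periodic f P := by
  obtain ⟨k, rfl⟩ := mem_zmultiples_iff.mp hP
  exact Periodic.zsmul (fun x => hf.apply_eq_of_norm_eq (by rw [AddCircle.coe_add_period])) k

theorem const_add (hf : IsUnimodal p f) (c : ℝ) : IsUnimodal p (fun x => c + f x) :=
  fun x y => (add_le_add_iff_left c).trans (hf x y)

theorem const_mul (hf : IsUnimodal p f) {c : ℝ} (hc : 0 < c) : IsUnimodal p (fun x => c * f x) :=
  fun x y => (mul_le_mul_iff_of_pos_left hc).trans (hf x y)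

theorem comp_div (hf : IsUnimodal p f) {s : ℝ} (hs : s ≠ 0) :
    IsUnimodal (s * p) (fun x => f (x / s)) := by
  have hnorm (x : ℝ) : ‖(x : AddCircle (s * p))‖ = |s| * ‖((x / s : ℝ) : AddCircle p)‖ := by
    rw [← AddCircle.norm_coe_mul, mul_div_cancel₀ x hs]
  intro x y
  rw [hnorm, hnorm, mul_le_mul_iff_of_pos_left (abs_pos.mpr hs)]
  exact hf _ _

theorem apply_eq_apply_zero_of_isLocalMax (hf : IsUnimodal p f) {t : ℝ} (h : IsLocalMax f t) :
    f t = f 0 := by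
  suffices hd : ‖(t : AddCircle p)‖ = 0 from hf.apply_eq_of_norm_eq (by simp [hd])
  obtain ⟨k, hk⟩ : ∃ k : ℤ, ‖(t : AddCircle p)‖ = |t - k * p| := ⟨_, AddCircle.norm_eq p⟩
  by_contra hne
  have hpos : 0 < ‖(t : AddCircle p)‖ := (norm_nonneg _).lt_of_ne' hne
  set w := t - k * p
  have hcloser : ∀ s ∈ Ico (0 : ℝ) 1, f t < f (k * p + s * w) := by
    intro s hs
    rw [hf.lt_iff]
    calc ‖((k * p + s * w : ℝ) : AddCircle p)‖ ≤ |k * p + s * w - k * p| :=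
          AddCircle.norm_coe_le_abs_sub_int_mul p _ k
      _ = s * ‖(t : AddCircle p)‖ := by rw [add_sub_cancel_left, abs_mul, abs_of_nonneg hs.1, hk]
      _ < ‖(t : AddCircle p)‖ := mul_lt_of_lt_one_left hpos hs.2
  have hlim : Tendsto (fun s : ℝ => k * p + s * w) (𝓝[<] 1) (𝓝 t) := by
    have : Tendsto (fun s : ℝ => k * p + s * w) (𝓝 1) (𝓝 (k * p + 1 * w)) :=
      (continuous_const.add (continuous_id.mul continuous_const)).tendsto 1
    simpa [w] using this.mono_left nhdsWithin_le_nhds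
  obtain ⟨s, hs_le, hs_mem⟩ := ((hlim.eventually h).and (Ico_mem_nhdsLT zero_lt_one)).exists
  exact (hcloser s hs_mem).not_ge hs_le

theorem iSup_add_sub {a b c : ℝ} (hf : IsUnimodal a f) (hg : IsUnimodal b g)
    (hfc : Continuous f) (hgc : Continuous g) (ha : a ≠ 0) (hb : b ≠ 0)
    (hc : zmultiples a ⊔ zmultiples b = zmultiples c) :
    IsUnimodal c (fun t => ⨆ u, f u + g (t - u)) := by
  obtain ⟨P, hP, hPa, hPb⟩ := exists_ne_zero_mem_zmultiples_of_sup_eq hc ha hb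
  have hmax (t : ℝ) : ∃ u, ∀ v, f v + g (t - v) ≤ f u + g (t - u) :=
    ((hf.periodic_of_mem_zmultiples hPa).add
      ((hg.periodic_of_mem_zmultiples hPb).const_sub t)).exists_forall_le_of_continuous hP
      (by fun_prop)
  choose u hu using hmax
  have hsup (t : ℝ) : ⨆ v, f v + g (t - v) = f (u t) + g (t - u t) :=
    ciSup_eq_of_forall_le_of_forall_lt_exists_gt (hu t) fun _ h => ⟨u t, h⟩
  refine of_le_and_lt fun x y hxy => ?_
  simp only [hsup]
  have hx : ‖(x : AddCircle c)‖ ≤ ‖(u x : AddCircle a)‖ + ‖((x - u x : ℝ) : AddCircle b)‖ :=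
    calc ‖(x : AddCircle c)‖ = ‖(u x : AddCircle c) + ((x - u x : ℝ) : AddCircle c)‖ := by
          rw [← AddCircle.coe_add, add_sub_cancel]
      _ ≤ ‖(u x : AddCircle c)‖ + ‖((x - u x : ℝ) : AddCircle c)‖ := norm_add_le _ _
      _ ≤ _ := add_le_add
          (AddCircle.norm_coe_le_of_zmultiples_le (hc ▸ le_sup_left) _)
          (AddCircle.norm_coe_le_of_zmultiples_le (hc ▸ le_sup_right) _)
  obtain ⟨v, hvf, hvg, hvsum⟩ :=
    exists_norm_coe_le_of_zmultiples_sup_eq hc (norm_nonneg _) (norm_nonneg _) (hxy.trans hx)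
  have hfv : f (u x) ≤ f v := (hf _ _).2 hvf
  have hgv : g (x - u x) ≤ g (y - v) := (hg _ _).2 hvg
  refine ⟨(add_le_add hfv hgv).trans (hu y v), fun hlt => ?_⟩
  rcases lt_or_lt_of_add_lt_add (hvsum.trans_lt (hlt.trans_le hx)) with h | h
  · exact (add_lt_add_of_lt_of_le ((hf.lt_iff _ _).2 h) hgv).trans_le (hu y v)
  · exact (add_lt_add_of_le_of_lt hfv ((hg.lt_iff _ _).2 h)).trans_le (hu y v)

end IsUnimodal

def angleSup (r α : ℝ) (g : ℝ → ℝ) (t : ℝ) : ℝ :=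
  ⨆ θ, r * cos θ + g (α * θ + t)

theorem mul_cos_le_abs (r θ : ℝ) : r * cos θ ≤ |r| :=
  (le_abs_self _).trans <| by
    rw [abs_mul]; exact mul_le_of_le_one_right (abs_nonneg r) (abs_cos_le_one θ)

section angleSup

variable {r α B : ℝ} {g : ℝ → ℝ}

theorem bddAbove_range_mul_cos_add (hg : ∀ s, g s ≤ B) (t : ℝ) :
    BddAbove (range fun θ => r * cos θ + g (α * θ + t)) :=
  ⟨|r| + B, by rintro _ ⟨θ, rfl⟩; exact add_le_add (mul_cos_le_abs r θ) (hg _)⟩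

theorem le_angleSup (hg : ∀ s, g s ≤ B) (t θ : ℝ) :
    r * cos θ + g (α * θ + t) ≤ angleSup r α g t :=
  le_ciSup (bddAbove_range_mul_cos_add hg t) θ

theorem angleSup_le (hg : ∀ s, g s ≤ B) (t : ℝ) : angleSup r α g t ≤ |r| + B :=
  ciSup_le fun θ => add_le_add (mul_cos_le_abs r θ) (hg _)

theorem LipschitzWith.angleSup {K : NNReal} (hg : LipschitzWith K g) (hb : ∀ s, g s ≤ B) :
    LipschitzWith K (angleSup r α g) :=
  LipschitzWith.of_le_add_mul K fun s t => ciSup_le fun θ => by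
    have := hg.le_add_mul (α * θ + s) (α * θ + t)
    rw [dist_add_left] at this
    linarith [le_angleSup (r := r) (α := α) hb t θ]

theorem angleSup_zero (hr : 0 ≤ r) : angleSup r 0 g = fun t => r + g t := by
  funext t
  simp only [angleSup, zero_mul, zero_add]
  refine ciSup_eq_of_forall_le_of_forall_lt_exists_gt (fun θ => ?_) fun _ h => ⟨0, by simpa⟩
  linarith [mul_le_of_le_one_right hr (cos_le_one θ)]

theorem angleSup_eq_iSup_add_sub (hα : α ≠ 0) (t : ℝ) :
    angleSup r α g t = ⨆ u, r * cos (u / α) + g (t - u) := by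
  rw [angleSup, ← (neg_surjective.comp (mul_left_surjective₀ hα)).iSup_comp
    (fun u => r * cos (u / α) + g (t - u))]
  congr 1
  funext θ
  simp only [comp_apply, neg_div, mul_div_cancel_left₀ θ hα, cos_neg, sub_neg_eq_add, add_comm t]

theorem IsUnimodal.angleSup (hr : 0 < r) (α : ℚ) {q : ℚ} (hq : q ≠ 0)
    (hg : IsUnimodal (q * (2 * π)) g) (hgc : Continuous g) :
    ∃ q' : ℚ, q' ≠ 0 ∧ IsUnimodal (q' * (2 * π)) (angleSup r α g) := by
  rcases eq_or_ne α 0 with rfl | hα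
  · rw [Rat.cast_zero, angleSup_zero hr.le]
    exact ⟨q, hq, hg.const_add r⟩
  obtain ⟨z, hz, hc⟩ := exists_zmultiples_sup_eq_rat_mul (2 * π) hα q
  have hα' : (α : ℝ) ≠ 0 := Rat.cast_ne_zero.mpr hα
  have hf : IsUnimodal (α * (2 * π)) (fun u => r * cos (u / α)) :=
    (isUnimodal_cos.const_mul hr).comp_div hα'
  refine ⟨z, hz, ?_⟩
  rw [funext (angleSup_eq_iSup_add_sub hα')]
  exact hf.iSup_add_sub hg (by fun_prop) hgc (mul_ne_zero hα' two_pi_pos.ne')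
    (mul_ne_zero (Rat.cast_ne_zero.mpr hq) two_pi_pos.ne') hc

end angleSup

theorem bddAbove_M_set (r1 r2 r3 : ℝ) (α1 α2 : ℚ) (t : ℝ) :
    BddAbove {v : ℝ | ∃ θ1 θ2 : ℝ,
      v = r1 * cos θ1 + r2 * cos θ2 + r3 * cos ((α1 : ℝ) * θ1 + (α2 : ℝ) * θ2 + t)} :=
  ⟨|r1| + |r2| + |r3|, by
    rintro _ ⟨θ1, θ2, rfl⟩
    linarith [mul_cos_le_abs r1 θ1, mul_cos_le_abs r2 θ2, mul_cos_le_abs r3 (α1 * θ1 + α2 * θ2 + t)]⟩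

theorem M_eq_angleSup (r1 r2 r3 : ℝ) (α1 α2 : ℚ) :
    M r1 r2 r3 α1 α2 = angleSup r1 α1 (angleSup r2 α2 (fun s => r3 * cos s)) := by
  funext t
  have hg : ∀ s, r3 * cos s ≤ |r3| := mul_cos_le_abs r3
  have hangle (θ1 θ2 : ℝ) : (α2 : ℝ) * θ2 + (α1 * θ1 + t) = α1 * θ1 + α2 * θ2 + t := by ring
  apply le_antisymm
  · refine csSup_le ⟨_, 0, 0, rfl⟩ ?_
    rintro _ ⟨θ1, θ2, rfl⟩
    have h2 := le_angleSup (r := r2) (α := α2) hg (α1 * θ1 + t) θ2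
    have h1 := le_angleSup (r := r1) (α := α1) (angleSup_le (r := r2) (α := α2) hg) t θ1
    rw [hangle] at h2
    linarith
  · refine ciSup_le fun θ1 => ?_
    suffices angleSup r2 α2 (fun s => r3 * cos s) (α1 * θ1 + t) ≤ M r1 r2 r3 α1 α2 t - r1 * cos θ1 by
      linarith
    refine ciSup_le fun θ2 => ?_
    have : r1 * cos θ1 + r2 * cos θ2 + r3 * cos (α1 * θ1 + α2 * θ2 + t) ≤ M r1 r2 r3 α1 α2 t :=
      le_csSup (bddAbove_M_set r1 r2 r3 α1 α2 t) ⟨θ1, θ2, rfl⟩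
    show r2 * cos θ2 + r3 * cos (α2 * θ2 + (α1 * θ1 + t)) ≤ _
    rw [hangle]
    linarith

theorem M_zero {r1 r2 r3 : ℝ} (hr1 : 0 ≤ r1) (hr2 : 0 ≤ r2) (hr3 : 0 ≤ r3) (α1 α2 : ℚ) :
    M r1 r2 r3 α1 α2 0 = r1 + r2 + r3 := by
  refine le_antisymm (csSup_le ⟨_, 0, 0, rfl⟩ ?_) (le_csSup (bddAbove_M_set ..) ⟨0, 0, by simp⟩)
  rintro _ ⟨θ1, θ2, rfl⟩
  linarith [mul_le_of_le_one_right hr1 (cos_le_one θ1), mul_le_of_le_one_right hr2 (cos_le_one θ2),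
    mul_le_of_le_one_right hr3 (cos_le_one (α1 * θ1 + α2 * θ2 + 0))]

theorem exists_isUnimodal_M {r1 r2 r3 : ℝ} (hr1 : 0 < r1) (hr2 : 0 < r2) (hr3 : 0 < r3)
    (α1 α2 : ℚ) : ∃ p, IsUnimodal p (M r1 r2 r3 α1 α2) := by
  have h3 : IsUnimodal ((1 : ℚ) * (2 * π)) (fun s => r3 * cos s) := by
    simpa using isUnimodal_cos.const_mul hr3
  have hL3 : LipschitzWith (‖r3‖₊ * 1) (fun s => r3 * cos s) :=
    (lipschitzWith_smul r3).comp lipschitzWith_cos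
  obtain ⟨q2, hq2, h2⟩ := h3.angleSup hr2 α2 one_ne_zero hL3.continuous
  obtain ⟨q1, -, h1⟩ := h2.angleSup hr1 α1 hq2 (hL3.angleSup (mul_cos_le_abs r3)).continuous
  exact ⟨_, M_eq_angleSup r1 r2 r3 α1 α2 ▸ h1⟩

theorem stmt3 (r1 r2 r3 : ℝ) (hr1 : 0 < r1) (hr2 : 0 < r2) (hr3 : 0 < r3)
    (α1 α2 : ℚ) (t0 : ℝ) (δ : ℝ) (hδ : 0 < δ)
    (hloc : ∀ t : ℝ, |t - t0| < δ → M r1 r2 r3 α1 α2 t ≤ M r1 r2 r3 α1 α2 t0) :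
    M r1 r2 r3 α1 α2 t0 = r1 + r2 + r3 ∧
    r1 + r2 + r3 = ⨆ t : ℝ, M r1 r2 r3 α1 α2 t := by
  obtain ⟨p, hM⟩ := exists_isUnimodal_M hr1 hr2 hr3 α1 α2
  have hmax : IsLocalMax (M r1 r2 r3 α1 α2) t0 :=
    Metric.eventually_nhds_iff.mpr ⟨δ, hδ, fun t ht => hloc t (by rwa [Real.dist_eq] at ht)⟩
  have h0 := M_zero hr1.le hr2.le hr3.le α1 α2
  exact ⟨(hM.apply_eq_apply_zero_of_isLocalMax hmax).trans h0, by rw [← h0, hM.iSup_eq_apply_zero]⟩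
end
end

section
/- Let r1, r2, r3 > 0 be real numbers, α1, α2 ∈ ℚ, and let l be the least element of the set { |mπ + m1 α1 π + m2 α2 π| : m, m1, m2 ∈ ℤ, mπ + m1 α1 π + m2 α2 π ≠ 0 }. Then for all t ∈ ℝ: M(t) = M(2l + t), M(t) = M(−t), and M(t) = M(2l − t). -/
noncomputable section

open Real

/-- The set `{ |mπ + m₁α₁π + m₂α₂π| : m, m₁, m₂ ∈ ℤ, mπ + m₁α₁π + m₂α₂π ≠ 0 }`. -/
def Lset (α1 α2 : ℚ) : Set ℝ :=
  {x : ℝ | ∃ m m1 m2 : ℤ,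
    x = |(m : ℝ) * π + (m1 : ℝ) * (α1 : ℝ) * π + (m2 : ℝ) * (α2 : ℝ) * π| ∧
    (m : ℝ) * π + (m1 : ℝ) * (α1 : ℝ) * π + (m2 : ℝ) * (α2 : ℝ) * π ≠ 0}

private lemma Mset_sub (r1 r2 r3 : ℝ) (α1 α2 : ℚ) (m m1 m2 : ℤ) (t : ℝ) :
    {v : ℝ | ∃ θ1 θ2 : ℝ,
      v = r1 * cos θ1 + r2 * cos θ2 + r3 * cos ((α1 : ℝ) * θ1 + (α2 : ℝ) * θ2 + t)} ⊆
    {v : ℝ | ∃ θ1 θ2 : ℝ,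
      v = r1 * cos θ1 + r2 * cos θ2 + r3 * cos ((α1 : ℝ) * θ1 + (α2 : ℝ) * θ2 +
        (t + (2*(m:ℝ)*π + 2*(m1:ℝ)*(α1:ℝ)*π + 2*(m2:ℝ)*(α2:ℝ)*π)))} := by
  rintro v ⟨θ1, θ2, rfl⟩
  refine ⟨θ1 - (m1 : ℝ) * (2*π), θ2 - (m2 : ℝ) * (2*π), ?_⟩
  have h1 : cos (θ1 - (m1 : ℝ) * (2*π)) = cos θ1 := by
    simpa using Real.cos_add_int_mul_two_pi θ1 (-m1)
  have h2 : cos (θ2 - (m2 : ℝ) * (2*π)) = cos θ2 := by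
    simpa using Real.cos_add_int_mul_two_pi θ2 (-m2)
  have h3 : (α1 : ℝ) * (θ1 - (m1 : ℝ) * (2*π)) + (α2 : ℝ) * (θ2 - (m2 : ℝ) * (2*π)) +
      (t + (2*(m:ℝ)*π + 2*(m1:ℝ)*(α1:ℝ)*π + 2*(m2:ℝ)*(α2:ℝ)*π)) =
      ((α1 : ℝ) * θ1 + (α2 : ℝ) * θ2 + t) + (m : ℝ) * (2*π) := by ring
  rw [h1, h2, h3, Real.cos_add_int_mul_two_pi]

private lemma M_shift (r1 r2 r3 : ℝ) (α1 α2 : ℚ) (m m1 m2 : ℤ) (t : ℝ) :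
    M r1 r2 r3 α1 α2 (t + (2*(m:ℝ)*π + 2*(m1:ℝ)*(α1:ℝ)*π + 2*(m2:ℝ)*(α2:ℝ)*π)) =
    M r1 r2 r3 α1 α2 t := by
  unfold M
  congr 1
  apply Set.Subset.antisymm
  · have h := Mset_sub r1 r2 r3 α1 α2 (-m) (-m1) (-m2)
      (t + (2*(m:ℝ)*π + 2*(m1:ℝ)*(α1:ℝ)*π + 2*(m2:ℝ)*(α2:ℝ)*π))
    have he : (t + (2*(m:ℝ)*π + 2*(m1:ℝ)*(α1:ℝ)*π + 2*(m2:ℝ)*(α2:ℝ)*π)) +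
        (2*((-m : ℤ):ℝ)*π + 2*((-m1 : ℤ):ℝ)*(α1:ℝ)*π + 2*((-m2 : ℤ):ℝ)*(α2:ℝ)*π) = t := by
      push_cast; ring
    rwa [he] at h
  · exact Mset_sub r1 r2 r3 α1 α2 m m1 m2 t

private lemma M_neg (r1 r2 r3 : ℝ) (α1 α2 : ℚ) (t : ℝ) :
    M r1 r2 r3 α1 α2 (-t) = M r1 r2 r3 α1 α2 t := by
  have key : ∀ s : ℝ,
      {v : ℝ | ∃ θ1 θ2 : ℝ,
        v = r1 * cos θ1 + r2 * cos θ2 + r3 * cos ((α1 : ℝ) * θ1 + (α2 : ℝ) * θ2 + s)} ⊆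
      {v : ℝ | ∃ θ1 θ2 : ℝ,
        v = r1 * cos θ1 + r2 * cos θ2 + r3 * cos ((α1 : ℝ) * θ1 + (α2 : ℝ) * θ2 + (-s))} := by
    rintro s v ⟨θ1, θ2, rfl⟩
    refine ⟨-θ1, -θ2, ?_⟩
    have h3 : (α1 : ℝ) * (-θ1) + (α2 : ℝ) * (-θ2) + (-s) =
        -((α1 : ℝ) * θ1 + (α2 : ℝ) * θ2 + s) := by ring
    rw [Real.cos_neg, Real.cos_neg, h3, Real.cos_neg]
  unfold M
  congr 1
  apply Set.Subset.antisymm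
  · have h := key (-t)
    simpa using h
  · exact key t

theorem stmt5 (r1 r2 r3 : ℝ) (hr1 : 0 < r1) (hr2 : 0 < r2) (hr3 : 0 < r3)
    (α1 α2 : ℚ) (l : ℝ) (hl : IsLeast (Lset α1 α2) l) :
    ∀ t : ℝ, M r1 r2 r3 α1 α2 t = M r1 r2 r3 α1 α2 (2 * l + t) ∧
      M r1 r2 r3 α1 α2 t = M r1 r2 r3 α1 α2 (-t) ∧
      M r1 r2 r3 α1 α2 t = M r1 r2 r3 α1 α2 (2 * l - t) := by
  obtain ⟨⟨m, m1, m2, habs, hne⟩, -⟩ := hl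
  -- 2*l equals 2*(m'π + m1'α1π + m2'α2π) for suitable signs of the integers
  have hper : ∀ t : ℝ, M r1 r2 r3 α1 α2 (t + 2 * l) = M r1 r2 r3 α1 α2 t := by
    intro t
    rcases abs_cases ((m : ℝ) * π + (m1 : ℝ) * (α1 : ℝ) * π + (m2 : ℝ) * (α2 : ℝ) * π) with
      ⟨h, -⟩ | ⟨h, -⟩
    · have he : t + 2 * l =
          t + (2*(m:ℝ)*π + 2*(m1:ℝ)*(α1:ℝ)*π + 2*(m2:ℝ)*(α2:ℝ)*π) := by
        rw [habs, h]; ring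
      rw [he, M_shift]
    · have he : t + 2 * l =
          t + (2*((-m : ℤ):ℝ)*π + 2*((-m1 : ℤ):ℝ)*(α1:ℝ)*π + 2*((-m2 : ℤ):ℝ)*(α2:ℝ)*π) := by
        rw [habs, h]; push_cast; ring
      rw [he, M_shift]
  intro t
  refine ⟨?_, (M_neg r1 r2 r3 α1 α2 t).symm, ?_⟩
  · have := hper t
    rw [show (2:ℝ) * l + t = t + 2 * l by ring]
    exact this.symm
  · have h1 := hper (-t)
    rw [show (2:ℝ) * l - t = -t + 2 * l by ring, h1, M_neg]
end
end

section
/- Let r1, r2, r3 > 0 be real numbers, α1, α2 ∈ ℚ, and let l be the least element of the set { |mπ + m1 α1 π + m2 α2 π| : m, m1, m2 ∈ ℤ, mπ + m1 α1 π + m2 α2 π ≠ 0 }. Then the function M is strictly decreasing on the interval [0, l] and strictly increasing on the interval [l, 2l]. -/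
noncomputable section

open Real

/-!
The value set of `M` at `t` only depends on `t` modulo `2Λ`, where `Λ = π(ℤ + ℤα₁ + ℤα₂)`, and `Λ`
is generated by `l`; so `M` is even and `2l`-periodic, and monotonicity on `[l, 2l]` follows from
that on `[0, l]` via `t ↦ 2l - t`.

For `0 ≤ t < t' ≤ l`, reduce the three angles of a maximiser at `t'` to `x₁, x₂, x₃ ∈ [-π, π]`.
Then `x₃ - α₁x₁ - α₂x₂ ≡ t' (mod 2l)`, and some `s ≡ t (mod 2l)` has
`|s| < |α₁x₁| + |α₂x₂| + |x₃|`. Multiplying each `xᵢ` by `±μ`, where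
`μ = s / (|α₁x₁| + |α₂x₂| + |x₃|)`, meets the constraint at `s` and shrinks every nonzero
`|xᵢ| ≤ π`, so it strictly increases the corresponding cosine: `M t' < M s = M t`.
-/

def piLattice (α1 α2 : ℚ) : AddSubgroup ℝ where
  carrier := {x | ∃ m m1 m2 : ℤ, x = m * π + m1 * α1 * π + m2 * α2 * π}
  add_mem' := by
    rintro _ _ ⟨m, m1, m2, rfl⟩ ⟨n, n1, n2, rfl⟩
    exact ⟨m + n, m1 + n1, m2 + n2, by push_cast; ring⟩
  zero_mem' := ⟨0, 0, 0, by simp⟩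
  neg_mem' := by
    rintro _ ⟨m, m1, m2, rfl⟩
    exact ⟨-m, -m1, -m2, by push_cast; ring⟩

namespace piLattice

variable {α1 α2 : ℚ} {l : ℝ}

theorem isLeast_pos_of_isLeast_Lset (hl : IsLeast (Lset α1 α2) l) :
    IsLeast {g | g ∈ piLattice α1 α2 ∧ 0 < g} l := by
  obtain ⟨⟨m, m1, m2, rfl, hne⟩, hmin⟩ := hl
  have hc : (m * π + m1 * α1 * π + m2 * α2 * π : ℝ) ∈ piLattice α1 α2 := ⟨m, m1, m2, rfl⟩
  refine ⟨⟨?_, abs_pos.2 hne⟩, ?_⟩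
  · rcases abs_choice (m * π + m1 * α1 * π + m2 * α2 * π : ℝ) with h | h <;> rw [h]
    exacts [hc, neg_mem hc]
  · rintro g ⟨⟨n, n1, n2, rfl⟩, hg⟩
    exact hmin ⟨n, n1, n2, (abs_of_pos hg).symm, hg.ne'⟩

theorem exists_int_mul_eq (hl : IsLeast {g | g ∈ piLattice α1 α2 ∧ 0 < g} l) {c : ℝ}
    (hc : c ∈ piLattice α1 α2) : ∃ k : ℤ, c = k * l := by
  rw [AddSubgroup.cyclic_of_min hl, AddSubgroup.mem_closure_singleton] at hc
  obtain ⟨k, rfl⟩ := hc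
  exact ⟨k, zsmul_eq_mul l k⟩

end piLattice

theorem exists_abs_le_pi_eq_add_int_mul_two_pi (θ : ℝ) :
    ∃ x, |x| ≤ π ∧ ∃ k : ℤ, θ = x + k * (2 * π) := by
  obtain ⟨k, hk⟩ := Angle.angle_eq_iff_two_pi_dvd_sub.1 (Angle.coe_toReal (θ : Angle)).symm
  exact ⟨_, Angle.abs_toReal_le_pi _, k, by linear_combination hk⟩

theorem exists_mul_eq_mul_abs (a x μ : ℝ) : ∃ φ, a * φ = μ * |a * x| ∧ |φ| = |μ| * |x| := by
  rcases abs_choice (a * x) with h | h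
  · exact ⟨μ * x, by rw [h]; ring, abs_mul μ x⟩
  · exact ⟨-(μ * x), by rw [h]; ring, by rw [abs_neg, abs_mul]⟩

theorem cos_le_cos_of_abs_eq_mul {x φ μ : ℝ} (hx : |x| ≤ π) (hμ : |μ| < 1)
    (h : |φ| = |μ| * |x|) : cos x ≤ cos φ ∧ (x ≠ 0 → cos x < cos φ) := by
  rw [← cos_abs x, ← cos_abs φ, h]
  refine ⟨cos_le_cos_of_nonneg_of_le_pi (by positivity) hx
    (mul_le_of_le_one_left (abs_nonneg x) hμ.le), fun hx0 => ?_⟩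
  exact cos_lt_cos_of_nonneg_of_le_pi (by positivity) hx
    (mul_lt_of_lt_one_left (abs_pos.2 hx0) hμ)

theorem exists_abs_add_int_mul_lt {l t t' : ℝ} (ht : 0 ≤ t) (htt' : t < t') (ht' : t' ≤ l)
    (k : ℤ) : ∃ j : ℤ, |t + j * (2 * l)| < |t' + k * (2 * l)| := by
  rcases le_or_gt 0 k with hk | hk
  · have hkl : 0 ≤ (k : ℝ) * (2 * l) := mul_nonneg (by exact_mod_cast hk) (by linarith)
    refine ⟨k, ?_⟩
    rw [abs_of_nonneg (by linarith), abs_of_nonneg (by linarith)]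
    linarith
  · have hkl : (k : ℝ) * l ≤ -1 * l :=
      mul_le_mul_of_nonneg_right (by exact_mod_cast Int.le_sub_one_of_lt hk) (by linarith)
    refine ⟨k + 1, ?_⟩
    rw [abs_of_neg (a := t' + k * (2 * l)) (by linarith), abs_lt]
    push_cast
    constructor <;> linarith

def trigSum (r1 r2 r3 : ℝ) (α1 α2 : ℚ) (t θ1 θ2 : ℝ) : ℝ :=
  r1 * cos θ1 + r2 * cos θ2 + r3 * cos ((α1 : ℝ) * θ1 + (α2 : ℝ) * θ2 + t)

section

variable {r1 r2 r3 : ℝ} {α1 α2 : ℚ}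

theorem trigSum_le_abs_add_abs_add_abs (t θ1 θ2 : ℝ) :
    trigSum r1 r2 r3 α1 α2 t θ1 θ2 ≤ |r1| + |r2| + |r3| := by
  have h : ∀ r θ : ℝ, r * cos θ ≤ |r| := fun r θ => calc
    r * cos θ ≤ |r * cos θ| := le_abs_self _
    _ = |r| * |cos θ| := abs_mul r (cos θ)
    _ ≤ |r| := mul_le_of_le_one_right (abs_nonneg r) (abs_cos_le_one θ)
  exact add_le_add_three (h _ _) (h _ _) (h _ _)

theorem trigSum_le_M (t θ1 θ2 : ℝ) :
    trigSum r1 r2 r3 α1 α2 t θ1 θ2 ≤ M r1 r2 r3 α1 α2 t :=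
  le_csSup ⟨_, by rintro _ ⟨θ1, θ2, rfl⟩; exact trigSum_le_abs_add_abs_add_abs t θ1 θ2⟩
    ⟨θ1, θ2, rfl⟩

theorem M_le_s6 {t b : ℝ} (h : ∀ θ1 θ2, trigSum r1 r2 r3 α1 α2 t θ1 θ2 ≤ b) :
    M r1 r2 r3 α1 α2 t ≤ b :=
  csSup_le ⟨_, 0, 0, rfl⟩ (by rintro _ ⟨θ1, θ2, rfl⟩; exact h θ1 θ2)

theorem M_le_M {t t' : ℝ}
    (h : ∀ θ1 θ2, ∃ φ1 φ2, trigSum r1 r2 r3 α1 α2 t θ1 θ2 = trigSum r1 r2 r3 α1 α2 t' φ1 φ2) :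
    M r1 r2 r3 α1 α2 t ≤ M r1 r2 r3 α1 α2 t' :=
  M_le_s6 fun θ1 θ2 => by
    obtain ⟨φ1, φ2, h⟩ := h θ1 θ2
    exact h ▸ trigSum_le_M t' φ1 φ2

theorem M_even : Function.Even (M r1 r2 r3 α1 α2) := by
  have hle : ∀ t, M r1 r2 r3 α1 α2 (-t) ≤ M r1 r2 r3 α1 α2 t := fun t =>
    M_le_M fun θ1 θ2 => ⟨-θ1, -θ2, by
      have harg : (α1 : ℝ) * -θ1 + α2 * -θ2 + t = -(α1 * θ1 + α2 * θ2 + -t) := by ring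
      rw [trigSum, trigSum, harg, cos_neg, cos_neg, cos_neg]⟩
  exact fun t => le_antisymm (hle t) (by simpa using hle (-t))

theorem M_le_M_add_two_mul {c : ℝ} (hc : c ∈ piLattice α1 α2) (t : ℝ) :
    M r1 r2 r3 α1 α2 t ≤ M r1 r2 r3 α1 α2 (t + 2 * c) := by
  obtain ⟨m, m1, m2, rfl⟩ := hc
  refine M_le_M fun θ1 θ2 => ⟨θ1 - m1 * (2 * π), θ2 - m2 * (2 * π), ?_⟩
  have harg : (α1 : ℝ) * (θ1 - m1 * (2 * π)) + α2 * (θ2 - m2 * (2 * π))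
      + (t + 2 * (m * π + m1 * α1 * π + m2 * α2 * π)) = α1 * θ1 + α2 * θ2 + t + m * (2 * π) := by
    ring
  rw [trigSum, trigSum, harg, cos_sub_int_mul_two_pi, cos_sub_int_mul_two_pi,
    cos_add_int_mul_two_pi]

theorem M_add_two_mul {c : ℝ} (hc : c ∈ piLattice α1 α2) (t : ℝ) :
    M r1 r2 r3 α1 α2 (t + 2 * c) = M r1 r2 r3 α1 α2 t :=
  le_antisymm (by simpa using M_le_M_add_two_mul (neg_mem hc) (t + 2 * c))
    (M_le_M_add_two_mul hc t)

theorem M_periodic {l : ℝ} (hl : l ∈ piLattice α1 α2) :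
    Function.Periodic (M r1 r2 r3 α1 α2) (2 * l) :=
  M_add_two_mul hl

theorem trigSum_periodic_left (t θ2 : ℝ) :
    Function.Periodic (fun θ1 => trigSum r1 r2 r3 α1 α2 t θ1 θ2) (2 * π * α1.den) := by
  have hden : (α1 : ℝ) * α1.den = α1.num := by exact_mod_cast Rat.mul_den_eq_num α1
  intro θ1
  have harg : (α1 : ℝ) * (θ1 + 2 * π * α1.den) + α2 * θ2 + t
      = α1 * θ1 + α2 * θ2 + t + α1.num * (2 * π) := by
    linear_combination 2 * π * hden
  simp only [trigSum]
  rw [harg, cos_add_int_mul_two_pi, mul_comm (2 * π), cos_add_nat_mul_two_pi]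

theorem trigSum_periodic_right (t θ1 : ℝ) :
    Function.Periodic (fun θ2 => trigSum r1 r2 r3 α1 α2 t θ1 θ2) (2 * π * α2.den) := by
  have hden : (α2 : ℝ) * α2.den = α2.num := by exact_mod_cast Rat.mul_den_eq_num α2
  intro θ2
  have harg : (α1 : ℝ) * θ1 + α2 * (θ2 + 2 * π * α2.den) + t
      = α1 * θ1 + α2 * θ2 + t + α2.num * (2 * π) := by
    linear_combination 2 * π * hden
  simp only [trigSum]
  rw [harg, cos_add_int_mul_two_pi, mul_comm (2 * π), cos_add_nat_mul_two_pi]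

theorem exists_M_eq_trigSum (t : ℝ) :
    ∃ θ1 θ2, M r1 r2 r3 α1 α2 t = trigSum r1 r2 r3 α1 α2 t θ1 θ2 := by
  have hp1 : 0 < 2 * π * α1.den := by have := α1.den_pos; positivity
  have hp2 : 0 < 2 * π * α2.den := by have := α2.den_pos; positivity
  have hcont : Continuous fun θ : ℝ × ℝ => trigSum r1 r2 r3 α1 α2 t θ.1 θ.2 := by
    unfold trigSum; fun_prop
  have hK : IsCompact (Set.Icc 0 (2 * π * α1.den) ×ˢ Set.Icc 0 (2 * π * α2.den)) :=
    isCompact_Icc.prod isCompact_Icc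
  obtain ⟨θ, -, hθ⟩ := hK.exists_isMaxOn ⟨(0, 0), ⟨⟨le_rfl, hp1.le⟩, ⟨le_rfl, hp2.le⟩⟩⟩
    hcont.continuousOn
  refine ⟨θ.1, θ.2, le_antisymm (M_le_s6 fun θ1 θ2 => ?_) (trigSum_le_M t θ.1 θ.2)⟩
  obtain ⟨y1, hy1, h1⟩ := (trigSum_periodic_left (r1 := r1) (r2 := r2) (r3 := r3) (α2 := α2)
    t θ2).exists_mem_Ico₀ hp1 θ1
  obtain ⟨y2, hy2, h2⟩ := (trigSum_periodic_right (r1 := r1) (r2 := r2) (r3 := r3) (α1 := α1)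
    t y1).exists_mem_Ico₀ hp2 θ2
  rw [h1, h2]
  exact isMaxOn_iff.1 hθ (y1, y2) ⟨Set.Ico_subset_Icc_self hy1, Set.Ico_subset_Icc_self hy2⟩

theorem exists_abs_le_pi_M_eq (t : ℝ) :
    ∃ x1 x2 x3 : ℝ, |x1| ≤ π ∧ |x2| ≤ π ∧ |x3| ≤ π ∧
      M r1 r2 r3 α1 α2 t = r1 * cos x1 + r2 * cos x2 + r3 * cos x3 ∧
      ∃ c ∈ piLattice α1 α2, x3 - α1 * x1 - α2 * x2 = t + 2 * c := by
  obtain ⟨θ1, θ2, hM⟩ := exists_M_eq_trigSum (r1 := r1) (r2 := r2) (r3 := r3) (α1 := α1)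
    (α2 := α2) t
  obtain ⟨x1, hx1, k1, rfl⟩ := exists_abs_le_pi_eq_add_int_mul_two_pi θ1
  obtain ⟨x2, hx2, k2, rfl⟩ := exists_abs_le_pi_eq_add_int_mul_two_pi θ2
  obtain ⟨x3, hx3, k3, h3⟩ :=
    exists_abs_le_pi_eq_add_int_mul_two_pi
      ((α1 : ℝ) * (x1 + k1 * (2 * π)) + α2 * (x2 + k2 * (2 * π)) + t)
  refine ⟨x1, x2, x3, hx1, hx2, hx3, ?_, _, ⟨-k3, k1, k2, rfl⟩, ?_⟩
  · rw [hM, trigSum, h3]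
    simp only [cos_add_int_mul_two_pi]
  · push_cast
    linear_combination -h3

theorem sum_lt_M_of_abs_lt (hr1 : 0 < r1) (hr2 : 0 < r2) (hr3 : 0 < r3) {x1 x2 x3 s : ℝ}
    (hx1 : |x1| ≤ π) (hx2 : |x2| ≤ π) (hx3 : |x3| ≤ π)
    (hs : |s| < |α1 * x1| + |α2 * x2| + |x3|) :
    r1 * cos x1 + r2 * cos x2 + r3 * cos x3 < M r1 r2 r3 α1 α2 s := by
  have hS : 0 < |α1 * x1| + |α2 * x2| + |x3| := (abs_nonneg s).trans_lt hs
  set μ := s / (|α1 * x1| + |α2 * x2| + |x3|)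
  have hμS : μ * (|α1 * x1| + |α2 * x2| + |x3|) = s := div_mul_cancel₀ s hS.ne'
  have hμ : |μ| < 1 := by rwa [abs_div, abs_of_pos hS, div_lt_one hS]
  have hμ' : |-μ| < 1 := by rwa [abs_neg]
  obtain ⟨φ1, hφ1, hφ1x⟩ := exists_mul_eq_mul_abs α1 x1 (-μ)
  obtain ⟨φ2, hφ2, hφ2x⟩ := exists_mul_eq_mul_abs α2 x2 (-μ)
  obtain ⟨φ3, hφ3, hφ3x⟩ := exists_mul_eq_mul_abs 1 x3 μ
  rw [one_mul, one_mul] at hφ3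
  have hconstraint : (α1 : ℝ) * φ1 + α2 * φ2 + s = φ3 := by
    linear_combination hφ1 + hφ2 - hφ3 - hμS
  obtain ⟨le1, lt1⟩ := cos_le_cos_of_abs_eq_mul hx1 hμ' hφ1x
  obtain ⟨le2, lt2⟩ := cos_le_cos_of_abs_eq_mul hx2 hμ' hφ2x
  obtain ⟨le3, lt3⟩ := cos_le_cos_of_abs_eq_mul hx3 hμ hφ3x
  have hle1 := mul_le_mul_of_nonneg_left le1 hr1.le
  have hle2 := mul_le_mul_of_nonneg_left le2 hr2.le
  have hle3 := mul_le_mul_of_nonneg_left le3 hr3.le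
  have hx : x1 ≠ 0 ∨ x2 ≠ 0 ∨ x3 ≠ 0 := by
    by_contra! h
    obtain ⟨rfl, rfl, rfl⟩ := h
    simp at hS
  calc r1 * cos x1 + r2 * cos x2 + r3 * cos x3 < r1 * cos φ1 + r2 * cos φ2 + r3 * cos φ3 := by
        rcases hx with h | h | h
        · linarith [mul_lt_mul_of_pos_left (lt1 h) hr1]
        · linarith [mul_lt_mul_of_pos_left (lt2 h) hr2]
        · linarith [mul_lt_mul_of_pos_left (lt3 h) hr3]
    _ = trigSum r1 r2 r3 α1 α2 s φ1 φ2 := by rw [trigSum, hconstraint]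
    _ ≤ M r1 r2 r3 α1 α2 s := trigSum_le_M s φ1 φ2

theorem M_lt_M (hr1 : 0 < r1) (hr2 : 0 < r2) (hr3 : 0 < r3) {l : ℝ}
    (hl : IsLeast (Lset α1 α2) l) {t t' : ℝ} (ht : 0 ≤ t) (htt' : t < t') (ht' : t' ≤ l) :
    M r1 r2 r3 α1 α2 t' < M r1 r2 r3 α1 α2 t := by
  have hl' := piLattice.isLeast_pos_of_isLeast_Lset hl
  obtain ⟨x1, x2, x3, hx1, hx2, hx3, hM, c, hc, hsum⟩ :=
    exists_abs_le_pi_M_eq (r1 := r1) (r2 := r2) (r3 := r3) t'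
  obtain ⟨k, rfl⟩ := piLattice.exists_int_mul_eq hl' hc
  obtain ⟨j, hj⟩ := exists_abs_add_int_mul_lt ht htt' ht' k
  have hs : |t + j * (2 * l)| < |α1 * x1| + |α2 * x2| + |x3| :=
    calc |t + j * (2 * l)| < |t' + k * (2 * l)| := hj
      _ = |x3 - α1 * x1 - α2 * x2| := by rw [hsum]; ring_nf
      _ ≤ |α1 * x1| + |α2 * x2| + |x3| := by
        have := abs_sub (x3 - α1 * x1) (α2 * x2)
        have := abs_sub x3 (α1 * x1)
        linarith
  rw [hM, ← (M_periodic hl'.1.1).int_mul j t]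
  exact sum_lt_M_of_abs_lt hr1 hr2 hr3 hx1 hx2 hx3 hs

end

theorem stmt6 (r1 r2 r3 : ℝ) (hr1 : 0 < r1) (hr2 : 0 < r2) (hr3 : 0 < r3)
    (α1 α2 : ℚ) (l : ℝ) (hl : IsLeast (Lset α1 α2) l) :
    StrictAntiOn (M r1 r2 r3 α1 α2) (Set.Icc 0 l) ∧
    StrictMonoOn (M r1 r2 r3 α1 α2) (Set.Icc l (2 * l)) := by
  have hanti : StrictAntiOn (M r1 r2 r3 α1 α2) (Set.Icc 0 l) :=
    fun t ht t' ht' htt' => M_lt_M hr1 hr2 hr3 hl ht.1 htt' ht'.2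
  have hreflect : ∀ t, M r1 r2 r3 α1 α2 (2 * l - t) = M r1 r2 r3 α1 α2 t := fun t =>
    (M_periodic (piLattice.isLeast_pos_of_isLeast_Lset hl).1.1).sub_eq'.trans (M_even t)
  refine ⟨hanti, fun t ht t' ht' htt' => ?_⟩
  rw [← hreflect t, ← hreflect t']
  exact hanti ⟨by linarith [ht'.2], by linarith [ht'.1]⟩ ⟨by linarith [ht.2], by linarith [ht.1]⟩
    (by linarith)
end
end

section
/- Let u1, u2, u3 be nonzero vectors in ℝ² that are pairwise non-parallel (i.e. u1×u2 ≠ 0, u1×u3 ≠ 0, u2×u3 ≠ 0), and let α, β > 0. If u1 + u2 is parallel to u1 + β u3, u2 + u3 is parallel to α u2 − u1, u3 − u1 is parallel to β u3 − α u2, u1 + α u2 is parallel to u1 + u3, α u2 + β u3 is parallel to u2 − u1, and β u3 − u1 is parallel to u3 − u2, then β = 1. -/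
noncomputable section

theorem stmt11 (u1 u2 u3 : ℝ × ℝ) (h1 : u1 ≠ 0) (h2 : u2 ≠ 0) (h3 : u3 ≠ 0)
    (h12 : cross u1 u2 ≠ 0) (h13 : cross u1 u3 ≠ 0) (h23 : cross u2 u3 ≠ 0)
    (α β : ℝ) (hα : 0 < α) (hβ : 0 < β)
    (hp1 : cross (u1 + u2) (u1 + β • u3) = 0)
    (hp2 : cross (u2 + u3) (α • u2 - u1) = 0)
    (hp3 : cross (u3 - u1) (β • u3 - α • u2) = 0)
    (hp4 : cross (u1 + α • u2) (u1 + u3) = 0)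
    (hp5 : cross (α • u2 + β • u3) (u2 - u1) = 0)
    (hp6 : cross (β • u3 - u1) (u3 - u2) = 0) :
    β = 1 := by
  obtain ⟨x1, y1⟩ := u1
  obtain ⟨x2, y2⟩ := u2
  obtain ⟨x3, y3⟩ := u3
  simp only [cross, Prod.smul_mk, Prod.mk_add_mk, Prod.mk_sub_mk, smul_eq_mul] at hp1 hp2 hp3 hp4 hp5 hp6 h13
  have t1 : (β * (1 + α) * (1 + β) - 2 * α * (1 - β)) * (x1 * y3 - y1 * x3) = 0 := by
    linear_combination (β * (1 + α)) * hp1 - (β * (1 + α)) * hp6 + 2 * β * hp2 -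
      2 * β * hp4 + 2 * α * hp1 + 2 * α * hp6
  have t2 : ((α - 1) * (β + 1) - 4) * (x1 * y3 - y1 * x3) = 0 := by
    linear_combination (-2 : ℝ) * hp2 - 2 * hp4 - (1 - α) * hp1 + (1 - α) * hp6
  have t3 : ((1 - β) * (α + β) - 4 * β ^ 2) * (x1 * y3 - y1 * x3) = 0 := by
    linear_combination (-(α + β)) * hp1 - (α + β) * hp6 + 2 * β * hp3 - 2 * β * hp5
  have r1 : β * (1 + α) * (1 + β) - 2 * α * (1 - β) = 0 :=
    (mul_eq_zero.mp t1).resolve_right h13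
  have r2 : (α - 1) * (β + 1) - 4 = 0 :=
    (mul_eq_zero.mp t2).resolve_right h13
  have r3 : (1 - β) * (α + β) - 4 * β ^ 2 = 0 :=
    (mul_eq_zero.mp t3).resolve_right h13
  have key : β * (β - 1) = 0 := by linear_combination (β / 8) * r2 - r1 / 8 - r3 / 4
  rcases mul_eq_zero.mp key with h | h
  · exact absurd h (ne_of_gt hβ)
  · linarith
end
end

section
/- Let u1, u2, u3 be nonzero vectors in ℝ² that are pairwise non-parallel (i.e. u1×u2 ≠ 0, u1×u3 ≠ 0, u2×u3 ≠ 0), and let α, β > 0. If u1 + u2 is parallel to β u3 − α u2, u2 + u3 is parallel to u1 + β u3, u3 − u1 is parallel to α u2 − u1, u1 + α u2 is parallel to u2 − u3, α u2 + β u3 is parallel to u1 + u3, and β u3 − u1 is parallel to u2 − u1, then α = 1. -/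
noncomputable section

theorem stmt13 (u1 u2 u3 : ℝ × ℝ) (h1 : u1 ≠ 0) (h2 : u2 ≠ 0) (h3 : u3 ≠ 0)
    (h12 : cross u1 u2 ≠ 0) (h13 : cross u1 u3 ≠ 0) (h23 : cross u2 u3 ≠ 0)
    (α β : ℝ) (hα : 0 < α) (hβ : 0 < β)
    (hp1 : cross (u1 + u2) (β • u3 - α • u2) = 0)
    (hp2 : cross (u2 + u3) (u1 + β • u3) = 0)
    (hp3 : cross (u3 - u1) (α • u2 - u1) = 0)
    (hp4 : cross (u1 + α • u2) (u2 - u3) = 0)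
    (hp5 : cross (α • u2 + β • u3) (u1 + u3) = 0)
    (hp6 : cross (β • u3 - u1) (u2 - u1) = 0) :
    α = 1 := by
  have key : 2 * cross u1 u2 * (1 - α) = 0 := by
    simp only [cross, Prod.fst_add, Prod.snd_add, Prod.fst_sub, Prod.snd_sub,
      Prod.smul_fst, Prod.smul_snd, smul_eq_mul] at hp1 hp2 hp4 hp5 ⊢
    linear_combination hp1 + hp4 - hp2 + hp5
  have : (1 : ℝ) - α = 0 := by
    rcases mul_eq_zero.mp key with h | h
    · exact absurd (by linarith : cross u1 u2 = 0) h12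
    · exact h
  linarith
end
end
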